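/- arXiv:2004.01089 — 3 statements merged into one kernel-verified Lean document; each statement's English description precedes it below -/
import Mathlib

section
/- Let π be a probability distribution on {1,…,m} with π(i) > 0 for all i and with π log-concave in i, i.e. π(i)² ≥ π(i−1)π(i+1) for all i (with the convention π(0) = π(m+1) = 0). Let M be the Markov chain on {1,…,m} with transition probabilities P(i,j) = (1/4)·min{1, π(j)/π(i)} whenever |i−j| = 1 and 1 ≤ j ≤ m, P(i,j) = 0 whenever |i−j| > 1, and self-loop probabilities P(i,i) making each row sum to 1. Let r = min_{1≤i≤m} (π(i−1) + π(i+1))/π(i). Then there is a universal constant C such that the mixing time of M satisfies τ(ε) ≤ C·(m²/r)·log(1/ε) for all ε ∈ (0,1/2); in particular τ(ε) = O(m²/r) for fixed ε. -/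
open Finset

/-- The Metropolis birth-death chain on `{1, …, m}` (states encoded as
`i : Fin m` ↦ `i+1`) for the distribution `π`:
`P(i,j) = (1/4) min{1, π(j)/π(i)}` when `|i-j| = 1`, `P(i,j) = 0` when
`|i-j| > 1`, and the self-loop probabilities make each row sum to `1`. -/
noncomputable def bdChain (m : ℕ) (π : ℕ → ℝ) : Matrix (Fin m) (Fin m) ℝ :=
  fun i j =>
    if i = j then
      1 - ∑ l : Fin m, (if l = i then 0 else
        if (i : ℕ) + 1 = (l : ℕ) ∨ (l : ℕ) + 1 = (i : ℕ) then
          (1/4) * min 1 (π ((l : ℕ) + 1) / π ((i : ℕ) + 1)) else 0)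
    else if (i : ℕ) + 1 = (j : ℕ) ∨ (j : ℕ) + 1 = (i : ℕ) then
      (1/4) * min 1 (π ((j : ℕ) + 1) / π ((i : ℕ) + 1))
    else 0

/-- The mixing time `τ(ε)` of a chain with transition matrix `P` and stationary
distribution `π`: the least `t` such that for all `s ≥ t` the total variation
distance from `π`, started from any state, is less than `ε`. -/
noncomputable def mixingTime {n : Type*} [Fintype n] [DecidableEq n]
    (P : Matrix n n ℝ) (π : n → ℝ) (ε : ℝ) : ℕ :=
  sInf {t : ℕ | ∀ s : ℕ, t ≤ s → ∀ x : n, (1/2) * ∑ y : n, |(P ^ s) x y - π y| < ε}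

/-!
Couple two copies of the chain so that, while they differ, exactly one of them moves, and once
they meet they move together. Log-concavity of `π` makes the probability of an upward move
decrease and that of a downward move increase along `{1, …, m}`, so the distance `d` between the
copies drifts inward: the concave potential `d (2m - d) ≤ m²` decreases in expectation by at least
`r / 4` per step until the copies meet. Summing the drift, the copies have met after `8 m² / r`
steps with probability at least `1/2`, hence by the Markov property after `k · 8 m² / r` steps
with probability at least `1 - 2⁻ᵏ`, and the coupling inequality turns this into the bound on
the total variation distance.
-/

open Matrix Kronecker

section MarkovChain

variable {n : Type*} [Fintype n]

theorem Matrix.mulVec_mono_of_mem_rowStochastic [DecidableEq n] {P : Matrix n n ℝ}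
    (hP : P ∈ rowStochastic ℝ n) {v w : n → ℝ} (h : v ≤ w) : P *ᵥ v ≤ P *ᵥ w := by
  intro i
  have := nonneg_mulVec_of_mem_rowStochastic hP (x := w - v) (fun j => sub_nonneg.2 (h j)) i
  rwa [mulVec_sub, Pi.sub_apply, sub_nonneg] at this

theorem Matrix.vecMul_eq_self_of_detailed_balance {P : Matrix n n ℝ} (hP : ∀ i, ∑ j, P i j = 1)
    {μ : n → ℝ} (h : ∀ i j, μ i * P i j = μ j * P j i) : μ ᵥ* P = μ := by
  ext j
  simp only [vecMul, dotProduct, h _ j, ← mul_sum, hP, mul_one]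

theorem Matrix.vecMul_pow_eq_self [DecidableEq n] {P : Matrix n n ℝ} {μ : n → ℝ}
    (h : μ ᵥ* P = μ) (s : ℕ) : μ ᵥ* P ^ s = μ := by
  induction s with
  | zero => simp
  | succ s ih => rw [pow_succ, ← vecMul_vecMul, ih, h]

theorem sum_abs_sub_le_of_vecMul_eq_self {Q : Matrix n n ℝ} {μ : n → ℝ} (hμ : 0 ≤ μ)
    (hμ1 : ∑ i, μ i = 1) (hQ : μ ᵥ* Q = μ) (x : n) {c : ℝ}
    (hc : ∀ y, ∑ z, |Q x z - Q y z| ≤ c) : ∑ z, |Q x z - μ z| ≤ c := by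
  have hsplit (z : n) : Q x z - μ z = ∑ y, μ y * (Q x z - Q y z) := by
    conv_lhs => rw [← hQ]
    simp only [vecMul, dotProduct, mul_sub, sum_sub_distrib, ← sum_mul, hμ1, one_mul]
  calc ∑ z, |Q x z - μ z| ≤ ∑ z, ∑ y, μ y * |Q x z - Q y z| := by
        refine sum_le_sum fun z _ => ?_
        rw [hsplit]
        refine (abs_sum_le_sum_abs _ _).trans_eq (sum_congr rfl fun y _ => ?_)
        rw [abs_mul, abs_of_nonneg (hμ y)]
    _ = ∑ y, μ y * ∑ z, |Q x z - Q y z| := by rw [sum_comm]; simp only [mul_sum]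
    _ ≤ ∑ y, μ y * c := by gcongr with y; exacts [hμ y, hc y]
    _ = c := by rw [← sum_mul, hμ1, one_mul]

theorem mixingTime_le [DecidableEq n] {P : Matrix n n ℝ} {μ : n → ℝ} {ε : ℝ} {t : ℕ}
    (h : ∀ s, t ≤ s → ∀ x, 1 / 2 * ∑ y, |(P ^ s) x y - μ y| < ε) : mixingTime P μ ε ≤ t :=
  Nat.sInf_le h

theorem mixingTime_eq_zero_of_subsingleton [DecidableEq n] [Subsingleton n] {P : Matrix n n ℝ}
    (hP : P ∈ rowStochastic ℝ n) {μ : n → ℝ} (hμ1 : ∑ i, μ i = 1) {ε : ℝ} (hε : 0 < ε) :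
    mixingTime P μ ε = 0 := by
  refine Nat.le_zero.1 (mixingTime_le fun s _ x => ?_)
  have hrow := sum_row_of_mem_rowStochastic (pow_mem hP s) x
  rw [Fintype.sum_subsingleton _ x] at hrow hμ1 ⊢
  simpa [hrow, hμ1] using hε

end MarkovChain

section AbsorbingSet

variable {ι : Type*} [Fintype ι] [DecidableEq ι] {K : Matrix ι ι ℝ} {D : Set ι}

theorem pow_apply_eq_zero_of_absorbing (hD : ∀ p ∈ D, ∀ q ∉ D, K p q = 0) (s : ℕ) {p q : ι}
    (hp : p ∈ D) (hq : q ∉ D) : (K ^ s) p q = 0 := by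
  induction s generalizing p with
  | zero => exact one_apply_ne (by rintro rfl; exact hq hp)
  | succ s ih =>
    rw [pow_succ', mul_apply]
    refine sum_eq_zero fun c _ => ?_
    by_cases hc : c ∈ D
    · rw [ih hc, mul_zero]
    · rw [hD p hp c hc, zero_mul]

theorem pow_mulVec_eq_zero_of_absorbing (hD : ∀ p ∈ D, ∀ q ∉ D, K p q = 0) (s : ℕ)
    {f : ι → ℝ} (hf : ∀ q ∈ D, f q = 0) {p : ι} (hp : p ∈ D) : (K ^ s *ᵥ f) p = 0 := by
  refine sum_eq_zero fun q _ => ?_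
  by_cases hq : q ∈ D
  · simp [hf q hq]
  · simp [pow_apply_eq_zero_of_absorbing hD s hp hq]

theorem antitone_pow_mulVec_indicator (hK : K ∈ rowStochastic ℝ ι)
    (hD : ∀ p ∈ D, ∀ q ∉ D, K p q = 0) : Antitone fun s : ℕ => K ^ s *ᵥ Dᶜ.indicator 1 := by
  have hχ : K *ᵥ Dᶜ.indicator 1 ≤ Dᶜ.indicator 1 := by
    intro p
    by_cases hp : p ∈ D
    · simpa [hp] using (pow_mulVec_eq_zero_of_absorbing hD 1 (by simp) hp).le
    · have := mulVec_mono_of_mem_rowStochastic hK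
        (Set.indicator_le_self' (s := Dᶜ) (f := 1) fun _ _ => zero_le_one) p
      simpa [hp, one_vecMul_of_mem_rowStochastic hK] using this
  refine antitone_nat_of_succ_le fun s => ?_
  rw [pow_succ, ← mulVec_mulVec]
  exact mulVec_mono_of_mem_rowStochastic (pow_mem hK s) hχ

theorem pow_mulVec_add_sum_le (hK : K ∈ rowStochastic ℝ ι) {H : ι → ℝ} {δ : ℝ}
    (hdrift : K *ᵥ H ≤ H - δ • Dᶜ.indicator 1) (s : ℕ) :
    K ^ s *ᵥ H + δ • ∑ t ∈ range s, K ^ t *ᵥ Dᶜ.indicator 1 ≤ H := by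
  induction s with
  | zero => simp
  | succ s ih =>
    have hstep : K ^ (s + 1) *ᵥ H ≤ K ^ s *ᵥ H - δ • K ^ s *ᵥ Dᶜ.indicator 1 := by
      rw [pow_succ, ← mulVec_mulVec, ← mulVec_smul, ← mulVec_sub]
      exact mulVec_mono_of_mem_rowStochastic (pow_mem hK s) hdrift
    intro p
    have h1 := hstep p
    have h2 := ih p
    simp only [Pi.add_apply, Pi.sub_apply, Pi.smul_apply, smul_eq_mul, sum_range_succ,
      Finset.sum_apply] at h1 h2 ⊢
    linarith

theorem mul_pow_mulVec_indicator_le (hK : K ∈ rowStochastic ℝ ι)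
    (hD : ∀ p ∈ D, ∀ q ∉ D, K p q = 0) {H : ι → ℝ} {B δ : ℝ} (hδ : 0 ≤ δ) (hH : 0 ≤ H)
    (hHB : H ≤ fun _ => B) (hdrift : K *ᵥ H ≤ H - δ • Dᶜ.indicator 1) (s : ℕ) (p : ι) :
    δ * (s + 1) * (K ^ s *ᵥ Dᶜ.indicator 1) p ≤ B := by
  have hsum := pow_mulVec_add_sum_le hK hdrift (s + 1) p
  have hpos := nonneg_mulVec_of_mem_rowStochastic (pow_mem hK (s + 1)) hH p
  have hmono : (s + 1 : ℝ) * (K ^ s *ᵥ Dᶜ.indicator 1) p ≤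
      ∑ t ∈ range (s + 1), (K ^ t *ᵥ Dᶜ.indicator 1) p := by
    simpa using card_nsmul_le_sum (range (s + 1)) _ _ fun t ht =>
      antitone_pow_mulVec_indicator hK hD (Nat.lt_succ_iff.1 (mem_range.1 ht)) p
  simp only [Pi.add_apply, Pi.smul_apply, smul_eq_mul, Finset.sum_apply] at hsum
  nlinarith [hHB p]

theorem pow_mulVec_indicator_le_half_pow (hK : K ∈ rowStochastic ℝ ι)
    (hD : ∀ p ∈ D, ∀ q ∉ D, K p q = 0) {H : ι → ℝ} {B δ : ℝ} (hδ : 0 < δ) (hH : 0 ≤ H)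
    (hHB : H ≤ fun _ => B) (hdrift : K *ᵥ H ≤ H - δ • Dᶜ.indicator 1) {s₀ : ℕ}
    (hs₀ : 2 * B ≤ δ * (s₀ + 1)) (k : ℕ) :
    K ^ (k * s₀) *ᵥ Dᶜ.indicator 1 ≤ (1 / 2 : ℝ) ^ k • Dᶜ.indicator 1 := by
  have hhalf : K ^ s₀ *ᵥ Dᶜ.indicator 1 ≤ (1 / 2 : ℝ) • Dᶜ.indicator 1 := by
    intro p
    by_cases hp : p ∈ D
    · simp [pow_mulVec_eq_zero_of_absorbing hD s₀ (f := Dᶜ.indicator 1) (by simp) hp, hp]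
    · have := mul_pow_mulVec_indicator_le hK hD hδ.le hH hHB hdrift s₀ p
      have : 0 < δ * (s₀ + 1) := by positivity
      simp only [Pi.smul_apply, Set.indicator_of_mem (Set.mem_compl hp), Pi.one_apply,
        smul_eq_mul, mul_one]
      nlinarith
  induction k with
  | zero => simp
  | succ k ih =>
    rw [add_mul, one_mul, pow_add, ← mulVec_mulVec, pow_succ', mul_smul]
    calc K ^ (k * s₀) *ᵥ K ^ s₀ *ᵥ Dᶜ.indicator 1
        ≤ K ^ (k * s₀) *ᵥ ((1 / 2 : ℝ) • Dᶜ.indicator 1) :=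
          mulVec_mono_of_mem_rowStochastic (pow_mem hK _) hhalf
      _ = (1 / 2 : ℝ) • K ^ (k * s₀) *ᵥ Dᶜ.indicator 1 := mulVec_smul _ _ _
      _ ≤ (1 / 2 : ℝ) • (1 / 2 : ℝ) ^ k • Dᶜ.indicator 1 :=
          smul_le_smul_of_nonneg_left ih (by norm_num)

end AbsorbingSet

section Coupling

variable {n : Type*}

structure Matrix.IsMarkovCoupling [Fintype n] (K : Matrix (n × n) (n × n) ℝ)
    (P : Matrix n n ℝ) : Prop where
  sum_fst : ∀ p a, ∑ b, K p (a, b) = P p.1 a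
  sum_snd : ∀ p b, ∑ a, K p (a, b) = P p.2 b

namespace Matrix.IsMarkovCoupling

variable [Fintype n]

theorem mul {K L : Matrix (n × n) (n × n) ℝ} {P Q : Matrix n n ℝ} (hK : IsMarkovCoupling K P)
    (hL : IsMarkovCoupling L Q) : IsMarkovCoupling (K * L) (P * Q) where
  sum_fst p a := by
    simp only [mul_apply]
    rw [sum_comm]
    simp_rw [← mul_sum, hL.sum_fst, Fintype.sum_prod_type, ← sum_mul, hK.sum_fst]
  sum_snd p b := by
    simp only [mul_apply]
    rw [sum_comm]
    simp_rw [← mul_sum, hL.sum_snd, Fintype.sum_prod_type_right, ← sum_mul, hK.sum_snd]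

variable [DecidableEq n]

theorem one : IsMarkovCoupling (1 : Matrix (n × n) (n × n) ℝ) (1 : Matrix n n ℝ) where
  sum_fst p a := by simp [one_apply, Prod.ext_iff, ite_and]
  sum_snd p b := by simp [one_apply, Prod.ext_iff, ite_and]

theorem pow {K : Matrix (n × n) (n × n) ℝ} {P : Matrix n n ℝ} (hK : IsMarkovCoupling K P)
    (s : ℕ) : IsMarkovCoupling (K ^ s) (P ^ s) := by
  induction s with
  | zero => simpa using one
  | succ s ih => simpa [pow_succ] using ih.mul hK

theorem sum_abs_sub_le {K : Matrix (n × n) (n × n) ℝ} {P : Matrix n n ℝ}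
    (hK : IsMarkovCoupling K P) (hK0 : ∀ p q, 0 ≤ K p q) (x y : n) :
    ∑ z, |P x z - P y z| ≤ 2 * (K *ᵥ (Set.diagonal n)ᶜ.indicator 1) (x, y) := by
  set χ := (Set.diagonal n)ᶜ.indicator (1 : n × n → ℝ)
  have hχ (a b : n) : χ (a, b) = if a = b then 0 else 1 := by
    simp [χ, Set.indicator_apply]
  set p := (x, y)
  have hfst (z : n) : P x z = K p (z, z) + ∑ b, K p (z, b) * χ (z, b) := by
    rw [← hK.sum_fst p z]
    simp [hχ, mul_ite, sum_ite, filter_ne]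
  have hsnd (z : n) : P y z = K p (z, z) + ∑ a, K p (a, z) * χ (a, z) := by
    rw [← hK.sum_snd p z]
    simp [hχ, mul_ite, sum_ite, filter_ne']
  have hnn (q) : 0 ≤ K p q * χ q := mul_nonneg (hK0 p q) (Set.indicator_nonneg (by simp) q)
  calc ∑ z, |P x z - P y z|
      ≤ ∑ z, (∑ b, K p (z, b) * χ (z, b) + ∑ a, K p (a, z) * χ (a, z)) := by
        gcongr with z
        rw [hfst, hsnd, add_sub_add_left_eq_sub]
        refine (abs_sub _ _).trans ?_
        rw [abs_of_nonneg (sum_nonneg fun _ _ => hnn _),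
          abs_of_nonneg (sum_nonneg fun _ _ => hnn _)]
    _ = 2 * (K *ᵥ χ) p := by
        rw [sum_add_distrib, two_mul, sum_comm (f := fun z a => K p (a, z) * χ (a, z))]
        simp only [mulVec, dotProduct, Fintype.sum_prod_type]

end Matrix.IsMarkovCoupling

variable [DecidableEq n]

/-- While the two copies differ, only one of them moves: the first one to `a` with probability
`P x a`, the second one to `b` with probability `P y b`, and both stay with probability
`P x x + P y y - 1`, which is nonnegative for a lazy chain. Copies that have met move together. -/
def Matrix.coalescingCoupling (P : Matrix n n ℝ) : Matrix (n × n) (n × n) ℝ := fun p q =>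
  if p.1 = p.2 then P p.1 q.1 * (1 : Matrix n n ℝ) q.1 q.2
  else (P ⊗ₖ (1 : Matrix n n ℝ) + (1 : Matrix n n ℝ) ⊗ₖ P - 1 : Matrix (n × n) (n × n) ℝ) p q

namespace Matrix.coalescingCoupling

variable {P : Matrix n n ℝ}

theorem nonneg (hP : ∀ i j, 0 ≤ P i j) (hlazy : ∀ i, 1 / 2 ≤ P i i) (p q : n × n) :
    0 ≤ coalescingCoupling P p q := by
  rcases p with ⟨x, y⟩
  rcases q with ⟨a, b⟩
  by_cases hxy : x = y
  · simp only [coalescingCoupling, hxy, if_true, one_apply]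
    split_ifs <;> simp [hP]
  · rcases eq_or_ne a x with rfl | hax <;> rcases eq_or_ne b y with rfl | hby
    · simpa [coalescingCoupling, hxy] using by linarith [hlazy a, hlazy b]
    · simp [coalescingCoupling, hxy, hby.symm, hP]
    · simp [coalescingCoupling, hxy, hax.symm, hP]
    · simp [coalescingCoupling, hxy, hax.symm, hby.symm]

theorem apply_eq_zero_of_mem_diagonal :
    ∀ p ∈ Set.diagonal n, ∀ q ∉ Set.diagonal n, coalescingCoupling P p q = 0 := by
  intro p hp q hq
  simp_all [coalescingCoupling]

variable [Fintype n]

theorem isMarkovCoupling (hP : ∀ i, ∑ j, P i j = 1) :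
    IsMarkovCoupling (coalescingCoupling P) P where
  sum_fst p a := by
    by_cases hp : p.1 = p.2
    · simp [coalescingCoupling, hp, one_apply]
    · simp [coalescingCoupling, hp, one_apply, kroneckerMap_apply, sum_add_distrib, hP,
        Prod.ext_iff, ite_and]
  sum_snd p b := by
    by_cases hp : p.1 = p.2
    · simp [coalescingCoupling, hp, one_apply]
    · simp [coalescingCoupling, hp, one_apply, kroneckerMap_apply, sum_add_distrib, hP,
        Prod.ext_iff, ite_and]

theorem mem_rowStochastic (hP : P ∈ rowStochastic ℝ n) (hlazy : ∀ i, 1 / 2 ≤ P i i) :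
    coalescingCoupling P ∈ rowStochastic ℝ (n × n) := by
  refine mem_rowStochastic_iff_sum.2 ⟨nonneg (fun _ _ => nonneg_of_mem_rowStochastic hP) hlazy,
    fun p => ?_⟩
  rw [Fintype.sum_prod_type]
  simp_rw [(isMarkovCoupling (sum_row_of_mem_rowStochastic hP)).sum_fst]
  exact sum_row_of_mem_rowStochastic hP p.1

theorem mulVec_apply_of_ne (F : n × n → ℝ) {x y : n} (h : x ≠ y) :
    (coalescingCoupling P *ᵥ F) (x, y) =
      (P *ᵥ fun a => F (a, y)) x + (P *ᵥ fun b => F (x, b)) y - F (x, y) := by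
  simp [coalescingCoupling, h, mulVec, dotProduct, Fintype.sum_prod_type, one_apply,
    kroneckerMap_apply, add_mul, sub_mul, sum_add_distrib, Prod.ext_iff, ite_and]

end Matrix.coalescingCoupling

end Coupling

theorem mixingTime_le_of_coupling_drift {n : Type*} [Fintype n] [DecidableEq n]
    {P : Matrix n n ℝ} {μ : n → ℝ} (hμ : 0 ≤ μ) (hμ1 : ∑ i, μ i = 1) (hμP : μ ᵥ* P = μ)
    {K : Matrix (n × n) (n × n) ℝ} (hK : K ∈ rowStochastic ℝ (n × n))
    (hKP : IsMarkovCoupling K P) (hD : ∀ p ∈ Set.diagonal n, ∀ q ∉ Set.diagonal n, K p q = 0)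
    {H : n × n → ℝ} {B δ : ℝ} (hδ : 0 < δ) (hH : 0 ≤ H) (hHB : H ≤ fun _ => B)
    (hdrift : K *ᵥ H ≤ H - δ • (Set.diagonal n)ᶜ.indicator 1) {s₀ k : ℕ}
    (hs₀ : 2 * B ≤ δ * (s₀ + 1)) {ε : ℝ} (hk : (1 / 2) ^ k < ε) :
    mixingTime P μ ε ≤ k * s₀ := by
  refine mixingTime_le fun s hs x => ?_
  have hcoal (y : n) : ∑ z, |(P ^ s) x z - (P ^ s) y z| ≤ 2 * (1 / 2) ^ k := by
    refine ((hKP.pow s).sum_abs_sub_le (fun _ _ => nonneg_of_mem_rowStochastic (pow_mem hK s))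
      x y).trans ?_
    have hmono := antitone_pow_mulVec_indicator hK hD hs (x, y)
    have hhalf := pow_mulVec_indicator_le_half_pow hK hD hδ hH hHB hdrift hs₀ k (x, y)
    have hχ : (Set.diagonal n)ᶜ.indicator (1 : n × n → ℝ) (x, y) ≤ 1 :=
      Set.indicator_le_self' (fun _ _ => zero_le_one) _
    simp only [Pi.smul_apply, smul_eq_mul] at hhalf
    nlinarith [pow_pos (by norm_num : (0 : ℝ) < 1 / 2) k]
  have := sum_abs_sub_le_of_vecMul_eq_self hμ hμ1 (vecMul_pow_eq_self hμP s) x hcoal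
  linarith

theorem exists_half_pow_lt_of_lt_half {ε : ℝ} (hε : 0 < ε) (hε2 : ε < 1 / 2) :
    ∃ k : ℕ, (1 / 2 : ℝ) ^ k < ε ∧ (k : ℝ) ≤ 2 * Real.log (1 / ε) / Real.log 2 := by
  have hlog2 : 0 < Real.log 2 := Real.log_pos (by norm_num)
  have hL : Real.log 2 < Real.log (1 / ε) :=
    Real.log_lt_log (by norm_num) (by rw [lt_div_iff₀ hε]; linarith)
  refine ⟨⌊Real.log (1 / ε) / Real.log 2⌋₊ + 1, ?_, ?_⟩
  · have hk : Real.log (1 / ε) < (⌊Real.log (1 / ε) / Real.log 2⌋₊ + 1 : ℕ) * Real.log 2 := by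
      rw [← div_lt_iff₀ hlog2]; exact_mod_cast Nat.lt_floor_add_one _
    rw [← Real.log_pow, Real.log_lt_log_iff (by positivity) (by positivity)] at hk
    rwa [_root_.one_div_pow, one_div_lt (by positivity) hε]
  · have h1 : 1 ≤ Real.log (1 / ε) / Real.log 2 := by rw [one_le_div hlog2]; exact hL.le
    have := Nat.floor_le (zero_le_one.trans h1)
    push_cast
    rw [mul_div_assoc]
    linarith

structure IsPosOnIcc (m : ℕ) (π : ℕ → ℝ) : Prop where
  pos : ∀ i, 1 ≤ i → i ≤ m → 0 < π i
  eq_zero : ∀ i, i = 0 ∨ m < i → π i = 0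

def IsLogConcaveOnIcc (m : ℕ) (π : ℕ → ℝ) : Prop :=
  ∀ i, 1 ≤ i → i ≤ m → π (i - 1) * π (i + 1) ≤ π i ^ 2

noncomputable def minNeighborRatio (m : ℕ) (π : ℕ → ℝ) (hm : 1 ≤ m) : ℝ :=
  (Icc 1 m).inf' (nonempty_Icc.mpr hm) fun i => (π (i - 1) + π (i + 1)) / π i

/-! State `k : Fin m` of `bdChain m π` is the point `k + 1` of `{1, …, m}`; `upRate π k` and
`downRate π k` are the probabilities of moving from it to `k + 2` and to `k`. -/

noncomputable def upRate (π : ℕ → ℝ) (k : ℕ) : ℝ := 1 / 4 * min 1 (π (k + 2) / π (k + 1))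

noncomputable def downRate (π : ℕ → ℝ) (k : ℕ) : ℝ := 1 / 4 * min 1 (π k / π (k + 1))

noncomputable def distPotential (m a b : ℕ) : ℝ := |(a : ℝ) - b| * (2 * m - |(a : ℝ) - b|)

section BirthDeath

variable {m : ℕ} {π : ℕ → ℝ}

theorem IsPosOnIcc.nonneg (hπ : IsPosOnIcc m π) (i : ℕ) : 0 ≤ π i := by
  rcases Nat.eq_zero_or_pos i with rfl | hi
  · exact (hπ.eq_zero 0 (Or.inl rfl)).ge
  · rcases le_or_gt i m with him | him
    · exact (hπ.pos i hi him).le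
    · exact (hπ.eq_zero i (Or.inr him)).ge

theorem IsPosOnIcc.ratio_antitone (hπ : IsPosOnIcc m π) (hlc : IsLogConcaveOnIcc m π)
    {i j : ℕ} (hij : i ≤ j) (hj : j ≤ m) : π (j + 1) * π i ≤ π (i + 1) * π j := by
  induction j, hij using Nat.le_induction with
  | base => exact le_rfl
  | succ j hij ih =>
    have hlcj : π j * π (j + 2) ≤ π (j + 1) ^ 2 := by simpa using hlc (j + 1) (by omega) hj
    have hj1 : 0 < π (j + 1) := hπ.pos (j + 1) (by omega) hj
    have := mul_le_mul_of_nonneg_left (ih (by omega)) (hπ.nonneg (j + 2))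
    have := mul_le_mul_of_nonneg_left hlcj (hπ.nonneg (i + 1))
    refine le_of_mul_le_mul_right ?_ hj1
    nlinarith

theorem minNeighborRatio_nonneg (hm : 1 ≤ m) (hπ : IsPosOnIcc m π) :
    0 ≤ minNeighborRatio m π hm :=
  le_inf' _ _ fun _ _ => div_nonneg (add_nonneg (hπ.nonneg _) (hπ.nonneg _)) (hπ.nonneg _)

theorem minNeighborRatio_pos (hm : 1 < m) (hπ : IsPosOnIcc m π) :
    0 < minNeighborRatio m π hm.le := by
  refine (lt_inf'_iff _).2 fun i hi => ?_
  obtain ⟨hi1, him⟩ := mem_Icc.1 hi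
  refine div_pos ?_ (hπ.pos i hi1 him)
  rcases eq_or_lt_of_le hi1 with rfl | hi2
  · exact add_pos_of_nonneg_of_pos (hπ.nonneg _) (hπ.pos 2 (by norm_num) hm)
  · exact add_pos_of_pos_of_nonneg (hπ.pos (i - 1) (by omega) (by omega)) (hπ.nonneg _)

theorem minNeighborRatio_le_two (hm : 1 ≤ m) (hπ : IsPosOnIcc m π) :
    minNeighborRatio m π hm ≤ 2 := by
  obtain ⟨i, hi, hmax⟩ := exists_max_image (Icc 1 m) π (nonempty_Icc.mpr hm)
  obtain ⟨hi1, him⟩ := mem_Icc.1 hi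
  have hle (j : ℕ) : π j ≤ π i := by
    by_cases hj : j ∈ Icc 1 m
    · exact hmax j hj
    · rw [hπ.eq_zero j (by simp only [mem_Icc, not_and_or, not_le] at hj; omega)]
      exact hπ.nonneg i
  refine (inf'_le _ hi).trans ?_
  rw [div_le_iff₀ (hπ.pos i hi1 him)]
  linarith [hle (i - 1), hle (i + 1)]

theorem downRate_nonneg (hπ : IsPosOnIcc m π) (k : ℕ) : 0 ≤ downRate π k :=
  mul_nonneg (by norm_num) (le_min zero_le_one (div_nonneg (hπ.nonneg _) (hπ.nonneg _)))

theorem upRate_le (k : ℕ) : upRate π k ≤ 1 / 4 :=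
  mul_le_of_le_one_right (by norm_num) (min_le_left _ _)

theorem downRate_le (k : ℕ) : downRate π k ≤ 1 / 4 :=
  mul_le_of_le_one_right (by norm_num) (min_le_left _ _)

theorem upRate_eq_ite (hπ : IsPosOnIcc m π) (k : ℕ) :
    upRate π k = if k + 1 < m then 1 / 4 * min 1 (π (k + 1 + 1) / π (k + 1)) else 0 := by
  split_ifs with hk
  · rfl
  · simp [upRate, hπ.eq_zero (k + 2) (Or.inr (by omega))]

theorem downRate_eq_ite (hπ : IsPosOnIcc m π) (k : ℕ) :
    downRate π k = if 0 < k then 1 / 4 * min 1 (π (k - 1 + 1) / π (k + 1)) else 0 := by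
  split_ifs with hk
  · rw [Nat.sub_add_cancel hk]; rfl
  · simp [downRate, Nat.eq_zero_of_not_pos hk, hπ.eq_zero 0 (Or.inl rfl)]

theorem upRate_antitone (hπ : IsPosOnIcc m π) (hlc : IsLogConcaveOnIcc m π) {k l : ℕ}
    (hkl : k ≤ l) (hl : l < m) : upRate π l ≤ upRate π k := by
  have := hπ.ratio_antitone hlc (i := k + 1) (j := l + 1) (by omega) hl
  refine mul_le_mul_of_nonneg_left (min_le_min le_rfl ?_) (by norm_num)
  rwa [div_le_div_iff₀ (hπ.pos _ (by omega) (by omega)) (hπ.pos _ (by omega) (by omega))]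

theorem downRate_monotone (hπ : IsPosOnIcc m π) (hlc : IsLogConcaveOnIcc m π) {k l : ℕ}
    (hkl : k ≤ l) (hl : l < m) : downRate π k ≤ downRate π l := by
  rcases Nat.eq_zero_or_pos k with rfl | hk
  · rw [downRate_eq_ite hπ 0, if_neg (lt_irrefl 0)]
    exact downRate_nonneg hπ l
  · have := hπ.ratio_antitone hlc hkl (by omega)
    refine mul_le_mul_of_nonneg_left (min_le_min le_rfl ?_) (by norm_num)
    rw [div_le_div_iff₀ (hπ.pos _ (by omega) (by omega)) (hπ.pos _ (by omega) (by omega))]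
    linarith

theorem upRate_add_downRate_ge (hm : 1 ≤ m) (hπ : IsPosOnIcc m π) {k : ℕ} (hk : k < m) :
    minNeighborRatio m π hm / 8 ≤ upRate π k + downRate π k := by
  have hr := minNeighborRatio_le_two hm hπ
  have hpos := hπ.pos (k + 1) (by omega) hk
  have hab : minNeighborRatio m π hm ≤ π (k + 2) / π (k + 1) + π k / π (k + 1) := by
    rw [← add_div, add_comm]
    exact inf'_le (fun i => (π (i - 1) + π (i + 1)) / π i)
      (mem_Icc.2 ⟨(by omega : 1 ≤ k + 1), (by omega : k + 1 ≤ m)⟩)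
  have ha := div_nonneg (hπ.nonneg (k + 2)) hpos.le
  have hb := div_nonneg (hπ.nonneg k) hpos.le
  unfold upRate downRate
  rcases le_total 1 (π (k + 2) / π (k + 1)) with h1 | h1 <;>
    rcases le_total 1 (π k / π (k + 1)) with h2 | h2 <;>
    simp only [min_eq_left, min_eq_right, h1, h2] <;> linarith

theorem sum_neighbors (x : Fin m) (c : ℕ → ℝ) :
    ∑ l : Fin m, (if l = x then 0 else if (x : ℕ) + 1 = l ∨ (l : ℕ) + 1 = x then c l else 0) =
      (if (x : ℕ) + 1 < m then c (x + 1) else 0) + (if 0 < (x : ℕ) then c (x - 1) else 0) := by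
  have h (l : ℕ) : (if l = (x : ℕ) then 0 else if (x : ℕ) + 1 = l ∨ l + 1 = x then c l else 0) =
      (if (x : ℕ) + 1 = l then c (x + 1) else 0) +
        (if 0 < (x : ℕ) then if (x : ℕ) - 1 = l then c (x - 1) else 0 else 0) := by
    split_ifs <;> first | omega | (simp only [add_zero, zero_add]; congr 1; omega) | simp
  simp_rw [← Fin.val_inj]
  rw [Fin.sum_univ_eq_sum_range (fun l => if l = (x : ℕ) then 0 else
    if (x : ℕ) + 1 = l ∨ l + 1 = x then c l else 0), sum_congr rfl fun l _ => h l]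
  by_cases hx : 0 < (x : ℕ) <;> simp [sum_add_distrib, hx]
  omega

theorem bdChain_apply_self (hπ : IsPosOnIcc m π) (x : Fin m) :
    bdChain m π x x = 1 - upRate π x - downRate π x := by
  rw [bdChain, if_pos rfl, sum_neighbors x fun l => 1 / 4 * min 1 (π (l + 1) / π (x + 1)),
    upRate_eq_ite hπ, downRate_eq_ite hπ]
  ring

theorem bdChain_mulVec (hπ : IsPosOnIcc m π) (g : ℕ → ℝ) (x : Fin m) :
    (bdChain m π *ᵥ fun j => g j) x =
      g x + upRate π x * (g (x + 1) - g x) + downRate π x * (g (x - 1) - g x) := by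
  set w : ℕ → ℝ := fun l => 1 / 4 * min 1 (π (l + 1) / π (x + 1))
  have hrow (j : Fin m) : bdChain m π x j * g j = (if j = x then bdChain m π x x * g x else 0) +
      (if j = x then 0 else if (x : ℕ) + 1 = j ∨ (j : ℕ) + 1 = x then w j * g j else 0) := by
    by_cases hj : j = x
    · simp [hj]
    · simp only [bdChain, hj, Ne.symm hj, if_false, zero_add, ite_mul, zero_mul, w]
  simp only [mulVec, dotProduct, hrow, sum_add_distrib, sum_ite_eq', mem_univ, if_true,
    sum_neighbors x fun l => w l * g l, bdChain_apply_self hπ]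
  rw [upRate_eq_ite hπ, downRate_eq_ite hπ]
  split_ifs <;> ring

theorem half_le_bdChain_apply_self (hπ : IsPosOnIcc m π) (x : Fin m) :
    1 / 2 ≤ bdChain m π x x := by
  rw [bdChain_apply_self hπ]
  linarith [upRate_le (π := π) x, downRate_le (π := π) x]

theorem bdChain_mem_rowStochastic (hπ : IsPosOnIcc m π) :
    bdChain m π ∈ rowStochastic ℝ (Fin m) := by
  refine mem_rowStochastic_iff_sum.2 ⟨fun x y => ?_, fun x => ?_⟩
  · by_cases hxy : x = y
    · subst hxy
      linarith [half_le_bdChain_apply_self hπ x]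
    · simp only [bdChain, hxy, if_false]
      split_ifs
      · exact mul_nonneg (by norm_num) (le_min zero_le_one (div_nonneg (hπ.nonneg _) (hπ.nonneg _)))
      · exact le_rfl
  · simpa [mulVec, dotProduct] using bdChain_mulVec hπ (fun _ => 1) x

theorem bdChain_detailed_balance (hπ : IsPosOnIcc m π) (x y : Fin m) :
    π ((x : ℕ) + 1) * bdChain m π x y = π ((y : ℕ) + 1) * bdChain m π y x := by
  by_cases hxy : x = y
  · rw [hxy]
  have key {a b : ℝ} (ha : 0 < a) : a * (1 / 4 * min 1 (b / a)) = 1 / 4 * min a b := by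
    rw [mul_left_comm, mul_min_of_nonneg _ _ ha.le, mul_one, mul_div_cancel₀ _ ha.ne']
  simp only [bdChain, hxy, Ne.symm hxy, if_false, or_comm, mul_ite, mul_zero]
  split_ifs
  · rw [key (hπ.pos _ (by omega) (by omega)), key (hπ.pos _ (by omega) (by omega)), min_comm]
  · rfl

theorem bdChain_stationary (hπ : IsPosOnIcc m π) :
    (fun i : Fin m => π ((i : ℕ) + 1)) ᵥ* bdChain m π = fun i : Fin m => π ((i : ℕ) + 1) :=
  vecMul_eq_self_of_detailed_balance
    (sum_row_of_mem_rowStochastic (bdChain_mem_rowStochastic hπ)) (bdChain_detailed_balance hπ)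

theorem distPotential_comm (a b : ℕ) : distPotential m a b = distPotential m b a := by
  simp only [distPotential, abs_sub_comm]

theorem distPotential_self (a : ℕ) : distPotential m a a = 0 := by
  simp [distPotential]

theorem distPotential_of_le {a b : ℕ} (hab : a ≤ b) :
    distPotential m a b = ((b : ℝ) - a) * (2 * m - ((b : ℝ) - a)) := by
  rw [distPotential, abs_sub_comm, abs_of_nonneg (sub_nonneg.2 (Nat.cast_le.2 hab))]

theorem distPotential_nonneg {a b : ℕ} (ha : a ≤ m) (hb : b ≤ m) : 0 ≤ distPotential m a b := by
  have : |(a : ℝ) - b| ≤ m := abs_sub_le_of_nonneg_of_le (by positivity) (by exact_mod_cast ha)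
    (by positivity) (by exact_mod_cast hb)
  exact mul_nonneg (abs_nonneg _) (by linarith)

theorem distPotential_le (a b : ℕ) : distPotential m a b ≤ m ^ 2 := by
  rw [distPotential]
  nlinarith [sq_nonneg ((m : ℝ) - |(a : ℝ) - b|)]

/- An outward move of either copy raises `d (2m - d)` by `2m - 2d - 1`, an inward move lowers it
by `2m - 2d + 1`, and by log-concavity the inward rates `upRate π x`, `downRate π y` dominate the
outward ones. -/
theorem bdChain_drift_of_lt (hm : 1 ≤ m) (hπ : IsPosOnIcc m π) (hlc : IsLogConcaveOnIcc m π)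
    {x y : Fin m} (hxy : (x : ℕ) < y) :
    (bdChain m π *ᵥ fun a => distPotential m a y) x +
        (bdChain m π *ᵥ fun b => distPotential m x b) y - distPotential m x y ≤
      distPotential m x y - minNeighborRatio m π hm / 4 := by
  rw [bdChain_mulVec hπ (fun a => distPotential m a y), bdChain_mulVec hπ (distPotential m x)]
  have hym := y.isLt
  set d : ℝ := (y : ℝ) - x with hd
  have hd1 : 1 ≤ d := by rw [hd, le_sub_iff_add_le']; exact_mod_cast hxy
  have hdm : d + 1 ≤ m := by
    have : (y : ℝ) + 1 ≤ m := by exact_mod_cast hym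
    linarith [(Nat.cast_nonneg x : (0 : ℝ) ≤ x)]
  have e0 : distPotential m x y = d * (2 * m - d) := distPotential_of_le hxy.le
  have e1 : distPotential m (x + 1) y = (d - 1) * (2 * m - (d - 1)) := by
    rw [distPotential_of_le hxy]; push_cast; ring
  have e2 : distPotential m x (y + 1) = (d + 1) * (2 * m - (d + 1)) := by
    rw [distPotential_of_le (by omega)]; push_cast; ring
  have e3 : distPotential m x (y - 1) = (d - 1) * (2 * m - (d - 1)) := by
    rw [distPotential_of_le (by omega), Nat.cast_sub (by omega)]; push_cast; ring
  have e4 : downRate π x * (distPotential m (x - 1) y - distPotential m x y) ≤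
      downRate π x * (2 * m - 2 * d - 1) := by
    rcases Nat.eq_zero_or_pos (x : ℕ) with hx | hx
    · simp [hx, downRate_eq_ite hπ 0]
    · refine le_of_eq (congrArg _ ?_)
      rw [e0, distPotential_of_le (by omega), Nat.cast_sub hx]; push_cast; ring
  have hdown : downRate π x ≤ downRate π y := downRate_monotone hπ hlc hxy.le hym
  have hmove : downRate π x + upRate π y ≤ downRate π y + upRate π x :=
    add_le_add hdown (upRate_antitone hπ hlc hxy.le hym)
  have hgap := mul_le_mul_of_nonneg_right hmove (by linarith : (0 : ℝ) ≤ 2 * m - 2 * d - 1)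
  have hrate := upRate_add_downRate_ge hm hπ x.isLt
  rw [e1, e2, e3, e0]
  rw [e0] at e4
  linarith

theorem coalescingCoupling_bdChain_drift (hm : 1 ≤ m) (hπ : IsPosOnIcc m π)
    (hlc : IsLogConcaveOnIcc m π) :
    coalescingCoupling (bdChain m π) *ᵥ (fun p : Fin m × Fin m => distPotential m p.1 p.2) ≤
      (fun p : Fin m × Fin m => distPotential m p.1 p.2) -
        (minNeighborRatio m π hm / 4) • (Set.diagonal (Fin m))ᶜ.indicator 1 := by
  rintro ⟨x, y⟩
  rcases eq_or_ne x y with rfl | hne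
  · have := pow_mulVec_eq_zero_of_absorbing
      (coalescingCoupling.apply_eq_zero_of_mem_diagonal (P := bdChain m π)) 1
      (f := fun p : Fin m × Fin m => distPotential m p.1 p.2)
      (fun q hq => by rw [Set.mem_diagonal_iff.1 hq]; exact distPotential_self _)
      (Set.mem_diagonal x)
    simp_all [distPotential_self]
  have hχ : (Set.diagonal (Fin m))ᶜ.indicator (1 : Fin m × Fin m → ℝ) (x, y) = 1 :=
    Set.indicator_of_mem (by simpa using hne) _
  simp only [coalescingCoupling.mulVec_apply_of_ne _ hne, Pi.sub_apply, Pi.smul_apply, hχ,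
    smul_eq_mul, mul_one]
  rcases lt_or_gt_of_ne (Fin.val_ne_of_ne hne) with h | h
  · exact bdChain_drift_of_lt hm hπ hlc h
  · have := bdChain_drift_of_lt hm hπ hlc h
    rw [show (fun a : Fin m => distPotential m a y) = fun b : Fin m => distPotential m y b from
        funext fun a => distPotential_comm _ _,
      show (fun b : Fin m => distPotential m x b) = fun a : Fin m => distPotential m a x from
        funext fun b => distPotential_comm _ _, distPotential_comm (x : ℕ)]
    linarith

theorem mixingTime_bdChain_le (hm : 1 < m) (hπ : IsPosOnIcc m π)
    (hsum : ∑ i : Fin m, π ((i : ℕ) + 1) = 1) (hlc : IsLogConcaveOnIcc m π) {ε : ℝ} {k : ℕ}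
    (hk : (1 / 2) ^ k < ε) :
    mixingTime (bdChain m π) (fun i => π ((i : ℕ) + 1)) ε ≤
      k * ⌊8 * m ^ 2 / minNeighborRatio m π hm.le⌋₊ := by
  have hP := bdChain_mem_rowStochastic hπ
  have hr := minNeighborRatio_pos hm hπ
  refine mixingTime_le_of_coupling_drift (fun i => hπ.nonneg _) hsum (bdChain_stationary hπ)
    (coalescingCoupling.mem_rowStochastic hP (half_le_bdChain_apply_self hπ))
    (coalescingCoupling.isMarkovCoupling (sum_row_of_mem_rowStochastic hP))
    coalescingCoupling.apply_eq_zero_of_mem_diagonal (by positivity)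
    (fun p => distPotential_nonneg p.1.isLt.le p.2.isLt.le) (fun p => distPotential_le _ _)
    (coalescingCoupling_bdChain_drift hm.le hπ hlc) ?_ hk
  have := Nat.lt_floor_add_one (8 * (m : ℝ) ^ 2 / minNeighborRatio m π hm.le)
  rw [div_lt_iff₀ hr] at this
  linarith

end BirthDeath

/-- Let `π` be a probability distribution on `{1, …, m}`,
positive there and vanishing outside (in particular `π(0) = π(m+1) = 0`), which
is log-concave: `π(i-1)π(i+1) ≤ π(i)²` for `1 ≤ i ≤ m`. Let `M` be the
Metropolis birth-death chain for `π` and let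
`r = min_{1 ≤ i ≤ m} (π(i-1) + π(i+1))/π(i)`. Then there is a universal
constant `C` such that `τ(ε) ≤ C (m²/r) log(1/ε)` for every `ε ∈ (0, 1/2)`. -/
theorem bdChain_mixing_time :
    ∃ C : ℝ, 0 < C ∧
      ∀ (m : ℕ) (hm : 1 ≤ m) (π : ℕ → ℝ),
        (∀ i : ℕ, 1 ≤ i → i ≤ m → 0 < π i) →
        (∀ i : ℕ, i = 0 ∨ m < i → π i = 0) →
        (∑ i ∈ Finset.Icc 1 m, π i = 1) →
        (∀ i : ℕ, 1 ≤ i → i ≤ m → π (i - 1) * π (i + 1) ≤ (π i) ^ 2) →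
        ∀ ε : ℝ, 0 < ε → ε < 1/2 →
          (mixingTime (bdChain m π) (fun i => π ((i : ℕ) + 1)) ε : ℝ) ≤
            C * ((m : ℝ) ^ 2 /
                ((Finset.Icc 1 m).inf' (Finset.nonempty_Icc.mpr hm)
                  (fun i => (π (i - 1) + π (i + 1)) / π i))) *
              Real.log (1 / ε) := by
  refine ⟨16 / Real.log 2, by positivity, fun m hm π hpos hzero hsum hlc ε hε hε2 => ?_⟩
  have hπ : IsPosOnIcc m π := ⟨hpos, hzero⟩
  have hsum' : ∑ i : Fin m, π ((i : ℕ) + 1) = 1 := by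
    rwa [Fin.sum_univ_eq_sum_range (fun i => π (i + 1)), range_eq_Ico, sum_Ico_add' π, zero_add,
      Ico_add_one_right_eq_Icc]
  have hL : 0 < Real.log (1 / ε) := Real.log_pos (by rw [lt_div_iff₀ hε]; linarith)
  change _ ≤ _ * (_ / minNeighborRatio m π hm) * _
  rcases hm.eq_or_lt with rfl | hm2
  -- For `m = 1` the ratio `r` is `0`, so the bound reads `τ(ε) ≤ 0` (as `x / 0 = 0`).
  · rw [mixingTime_eq_zero_of_subsingleton (bdChain_mem_rowStochastic hπ) hsum' hε,
      Nat.cast_zero]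
    have := minNeighborRatio_nonneg le_rfl hπ
    exact mul_nonneg (mul_nonneg (by positivity) (by positivity)) hL.le
  · obtain ⟨k, hkε, hk⟩ := exists_half_pow_lt_of_lt_half hε hε2
    have hr := minNeighborRatio_pos hm2 hπ
    calc (mixingTime (bdChain m π) (fun i => π ((i : ℕ) + 1)) ε : ℝ)
        ≤ k * ⌊8 * m ^ 2 / minNeighborRatio m π hm⌋₊ := by
          exact_mod_cast mixingTime_bdChain_le hm2 hπ hsum' hlc hkε
      _ ≤ 2 * Real.log (1 / ε) / Real.log 2 * (8 * m ^ 2 / minNeighborRatio m π hm) := by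
          gcongr
          exact Nat.floor_le (by positivity)
      _ = 16 / Real.log 2 * (m ^ 2 / minNeighborRatio m π hm) * Real.log (1 / ε) := by ring
end

section
/- For all real α and β, all m ≥ 2, and all 0 ≤ k ≤ ⌊m/2⌋ − 1, let S_k = {x ∈ 𝔐²_m : |x|_U = k} and let B_k be the subset of S_k consisting of those 2-Motzkin paths in which a pair of adjacent H symbols occurs before all other H or I symbols (i.e., the first two symbols of x that belong to {H, I} are both H and occupy consecutive positions in x). Then Σ_{x ∈ B_k} e^{−E(x)} = ((m − 2k)/m) · (e^{−α}/(e^{−α} + e^{−β}))² · Σ_{x ∈ S_k} e^{−E(x)}. -/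
open Finset

/-- The four symbols of a 2-Motzkin path: up-step `U`, two colors of
horizontal steps `H` and `I`, and down-step `D`. -/
inductive MSym : Type
  | U | H | I | D
  deriving DecidableEq

instance : Fintype MSym where
  elems := {MSym.U, MSym.H, MSym.I, MSym.D}
  complete := fun x => by cases x <;> simp

/-- `symCount x a` is `|x|_a`, the number of occurrences of the symbol `a` in `x`. -/
def symCount {m : ℕ} (x : Fin m → MSym) (a : MSym) : ℕ :=
  (Finset.univ.filter (fun i => x i = a)).card

/-- the number of occurrences of `a` among the first `j+1` symbols of `x`. -/
def symCountPrefix {m : ℕ} (x : Fin m → MSym) (a : MSym) (j : Fin m) : ℕ :=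
  (Finset.univ.filter (fun i => i ≤ j ∧ x i = a)).card

/-- `x` is a 2-Motzkin path: no prefix has more `D`s than `U`s, and the
total number of `U`s equals the total number of `D`s. -/
def IsMotzkin2 {m : ℕ} (x : Fin m → MSym) : Prop :=
  (∀ j : Fin m, symCountPrefix x MSym.D j ≤ symCountPrefix x MSym.U j) ∧
    symCount x MSym.U = symCount x MSym.D

instance {m : ℕ} : DecidablePred (IsMotzkin2 (m := m)) := fun _ => by
  unfold IsMotzkin2; infer_instance

/-- `𝔐²_m` : the set of 2-Motzkin paths of length `m`. -/
abbrev Motzkin2 (m : ℕ) : Type := {x : Fin m → MSym // IsMotzkin2 x}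

/-- The energy `E(x) = α(|x|_U + |x|_H + 1) + β |x|_I`. -/
noncomputable def energy (α β : ℝ) {m : ℕ} (x : Fin m → MSym) : ℝ :=
  α * ((symCount x MSym.U : ℝ) + (symCount x MSym.H : ℝ) + 1) + β * (symCount x MSym.I : ℝ)

/-- pairs of consecutive positions `(i, i+1)`. -/
def adjPairs (m : ℕ) : Finset (Fin m × Fin m) :=
  Finset.univ.filter (fun p => (p.2 : ℕ) = (p.1 : ℕ) + 1)

/-- The string `x` with the symbols `a`, `b` placed at positions `i`, `j`. -/
def setTwo {m : ℕ} (x : Fin m → MSym) (i j : Fin m) (a b : MSym) : Fin m → MSym :=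
  Function.update (Function.update x i a) j b

def isUD (a : MSym) : Prop := a = MSym.U ∨ a = MSym.D
def isHI (a : MSym) : Prop := a = MSym.H ∨ a = MSym.I
instance : DecidablePred isUD := fun a => by unfold isUD; infer_instance
instance : DecidablePred isHI := fun a => by unfold isHI; infer_instance

/-- The probability of moving from `x` to a *different* string `y` in one step
of the chain `M`: with probability 1/4 each, one of the four kinds of moves is
proposed (a uniformly random choice of positions together with the indicated
coin flips), and an (automatically valid) proposal `y ≠ x` is accepted with
probability 1/2. -/
noncomputable def stepWeight (α β : ℝ) {m : ℕ} (x y : Fin m → MSym) : ℝ :=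
  -- move 1 : UD ↔ HH at a random pair of consecutive positions
  (1/4) * (1/((m : ℝ) - 1)) * (1/2) *
    (∑ p ∈ adjPairs m,
      ((if x p.1 = MSym.U ∧ x p.2 = MSym.D ∧ y = setTwo x p.1 p.2 MSym.H MSym.H then
          Real.exp (-α) / (1 + Real.exp (-α)) else 0) +
       (if x p.1 = MSym.H ∧ x p.2 = MSym.H ∧ y = setTwo x p.1 p.2 MSym.U MSym.D then
          1 / (1 + Real.exp (-α)) else 0)))
  -- move 2 : H ↔ I at a random position
  + (1/4) * (1/(m : ℝ)) * (1/2) *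
    (∑ i : Fin m,
      ((if x i = MSym.I ∧ y = Function.update x i MSym.H then
          Real.exp (-α) / (Real.exp (-α) + Real.exp (-β)) else 0) +
       (if x i = MSym.H ∧ y = Function.update x i MSym.I then
          Real.exp (-β) / (Real.exp (-α) + Real.exp (-β)) else 0)))
  -- move 3 : swap the symbols at two uniform random positions, both in {U, D}
  + (1/4) * (1/((m : ℝ) * (m : ℝ))) * (1/2) *
    (∑ p : Fin m × Fin m,
      (if isUD (x p.1) ∧ isUD (x p.2) ∧ y = setTwo x p.1 p.2 (x p.2) (x p.1) then
        (1 : ℝ) else 0))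
  -- move 4 : reverse an adjacent pair consisting of one of {U,D} and one of {H,I}
  + (1/4) * (1/((m : ℝ) - 1)) * (1/2) *
    (∑ p ∈ adjPairs m,
      (if ((isUD (x p.1) ∧ isHI (x p.2)) ∨ (isHI (x p.1) ∧ isUD (x p.2))) ∧
          y = setTwo x p.1 p.2 (x p.2) (x p.1) then (1 : ℝ) else 0))

/-- The transition matrix of the Markov chain `M` on `𝔐²_m`: off the diagonal
the probability of the corresponding accepted move; proposals that are rejected,
invalid, or coincide with the current state contribute to the holding
probability on the diagonal. -/
noncomputable def transP (α β : ℝ) (m : ℕ) : Matrix (Motzkin2 m) (Motzkin2 m) ℝ :=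
  fun x y =>
    if x = y then
      1 - ∑ z : Motzkin2 m, (if z = x then 0 else stepWeight α β x.1 z.1)
    else stepWeight α β x.1 y.1

/-- The Gibbs distribution `π(x) = e^{-E(x)}/Z` on `𝔐²_m`. -/
noncomputable def gibbs (α β : ℝ) (m : ℕ) (x : Motzkin2 m) : ℝ :=
  Real.exp (-(energy α β x.1)) / ∑ y : Motzkin2 m, Real.exp (-(energy α β y.1))

/-- The spectral gap `1 - |λ₁|` of a transition matrix: one minus the largest
absolute value of an eigenvalue different from `λ₀ = 1`. -/
noncomputable def spectralGap {n : Type*} [Fintype n] [DecidableEq n]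
    (P : Matrix n n ℝ) : ℝ :=
  1 - sSup {r : ℝ | ∃ μ : ℂ,
    μ ∈ spectrum ℂ (P.map (fun t => (t : ℂ))) ∧ μ ≠ 1 ∧ r = ‖μ‖}

/-- `S_k = {x ∈ 𝔐²_m : |x|_U = k}`. -/
def Sset (m k : ℕ) : Finset (Motzkin2 m) :=
  Finset.univ.filter (fun x => symCount x.1 MSym.U = k)

/-- A pair of adjacent `H` symbols occurs in `x` before all other `H` or `I`
symbols: the first two symbols of `x` belonging to `{H, I}` are both `H` and
occupy consecutive positions. -/
def firstHIPairHH {m : ℕ} (x : Fin m → MSym) : Prop :=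
  ∃ p : Fin m × Fin m, (p.2 : ℕ) = (p.1 : ℕ) + 1 ∧
    x p.1 = MSym.H ∧ x p.2 = MSym.H ∧
    ∀ i : Fin m, (x i = MSym.H ∨ x i = MSym.I) → i = p.1 ∨ p.2 ≤ i

instance {m : ℕ} : DecidablePred (firstHIPairHH (m := m)) := fun _ => by
  unfold firstHIPairHH; infer_instance


/-!
Put `a = e^{-α}` and `b = e^{-β}`. Then `e^{-E(x)} = a · ∏ᵢ w(xᵢ)` with letter weights
`w U = w H = a`, `w I = b`, `w D = 1`. Recolouring every `I` as `H` sends a path to its *shape*,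
and the fibre over a shape `σ` consists of all recolourings of its `m - 2k` horizontal steps, of
total weight `(a + b)^(m-2k) a^k`. A path lies in `B_k` iff the two smallest elements of the set
`T` of horizontal positions of its shape are adjacent and both carry `H`; inside the fibre the
second condition has relative weight `(a / (a + b))²`.

It remains to count shapes. Reading the non-horizontal letters of a shape in order gives a
bijection between the shapes with horizontal set `T` and the Dyck words of length `2k`, for each of
the `C(m, h)` sets `T` of size `h = m - 2k`. Removing the smallest element shows that exactly
`C(m - 1, h - 1) = (h / m) C(m, h)` of these sets have their two smallest elements adjacent.
-/

theorem MSym.univ_eq : (univ : Finset MSym) = {MSym.U, MSym.H, MSym.I, MSym.D} := rfl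

theorem Fintype.sum_filter_piFinset_apply_eq_mul {ι α R : Type*} [Fintype ι] [DecidableEq ι]
    [DecidableEq α] [CommSemiring R] (t : ι → Finset α) (f : α → R) {j : ι} {c : α}
    (hc : c ∈ t j) :
    (∑ x ∈ Fintype.piFinset t with x j = c, ∏ i, f (x i)) * ∑ a ∈ t j, f a =
      f c * ∑ x ∈ Fintype.piFinset t, ∏ i, f (x i) := by
  rw [← Fintype.piFinset_update_singleton_eq_filter_piFinset_eq t j hc, ← prod_univ_sum,
    ← prod_univ_sum, Fintype.prod_eq_mul_prod_compl j,
    Fintype.prod_eq_mul_prod_compl j (fun i => ∑ a ∈ t i, f a)]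
  have hrest : ∏ i ∈ {j}ᶜ, ∑ a ∈ Function.update t j {c} i, f a =
      ∏ i ∈ {j}ᶜ, ∑ a ∈ t i, f a :=
    Finset.prod_congr rfl fun i hi => by
      rw [Function.update_of_ne (by simpa using hi)]
  rw [hrest, Function.update_self, sum_singleton]
  ring

theorem Finset.orderEmbOfFin_orderIsoOfFin_symm {α : Type*} [LinearOrder α] (s : Finset α)
    {n : ℕ} (h : #s = n) (a : s) : s.orderEmbOfFin h ((s.orderIsoOfFin h).symm a) = a := by
  rw [← coe_orderIsoOfFin_apply, OrderIso.apply_symm_apply]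

theorem Finset.card_filter_orderEmbOfFin {α : Type*} [LinearOrder α] (s : Finset α) {n : ℕ}
    (h : #s = n) (P : α → Prop) [DecidablePred P] :
    #{l | P (s.orderEmbOfFin h l)} = #{a ∈ s | P a} := by
  conv_rhs => rw [← map_orderEmbOfFin_univ s h]
  rw [filter_map, card_map]
  rfl

theorem Monotone.forall_not_le_or_exists_forall_le_iff {α β : Type*} [LinearOrder α] [Fintype α]
    [Preorder β] {f : α → β} (hf : Monotone f) (b : β) :
    (∀ a, ¬f a ≤ b) ∨ ∃ t, ∀ a, f a ≤ b ↔ a ≤ t := by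
  classical
  by_cases h : ∃ a, f a ≤ b
  · obtain ⟨a, ha⟩ := h
    obtain ⟨t, ht, htmax⟩ :=
      exists_max_image (univ.filter fun a => f a ≤ b) id ⟨a, by simpa using ha⟩
    simp only [mem_filter, mem_univ, true_and, id] at ht htmax
    exact Or.inr ⟨t, fun a => ⟨htmax a, fun hat => (hf hat).trans ht⟩⟩
  · exact Or.inl (not_exists.1 h)

namespace Motzkin2Path

open MSym

variable {m k : ℕ}

theorem prod_apply_eq_pow_symCount {R : Type*} [CommMonoid R] (g : MSym → R)
    (x : Fin m → MSym) :
    ∏ i, g (x i) = g U ^ symCount x U * g H ^ symCount x H * g I ^ symCount x I *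
      g D ^ symCount x D := by
  rw [← prod_fiberwise univ x (fun i => g (x i))]
  have fiber (c : MSym) : ∏ i with x i = c, g (x i) = g c ^ symCount x c := by
    rw [prod_congr rfl fun i hi => by rw [(mem_filter.1 hi).2], prod_const]
    rfl
  simp only [fiber, MSym.univ_eq]
  simp [mul_assoc]

theorem symCount_eq_zero_iff {x : Fin m → MSym} {a : MSym} :
    symCount x a = 0 ↔ ∀ i, x i ≠ a := by
  simp [symCount, filter_eq_empty_iff]

noncomputable def symWeight (α β : ℝ) : MSym → ℝ
  | U => Real.exp (-α)
  | H => Real.exp (-α)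
  | I => Real.exp (-β)
  | D => 1

theorem exp_neg_energy (α β : ℝ) (x : Fin m → MSym) :
    Real.exp (-energy α β x) = Real.exp (-α) * ∏ i, symWeight α β (x i) := by
  rw [prod_apply_eq_pow_symCount]
  simp only [symWeight, one_pow, mul_one, energy, ← Real.exp_nat_mul, ← Real.exp_add]
  congr 1
  ring

def paths (m k : ℕ) : Finset (Fin m → MSym) := {x | IsMotzkin2 x ∧ symCount x U = k}

theorem sum_Sset_eq_sum_paths {R : Type*} [AddCommMonoid R] (f : (Fin m → MSym) → R) :
    ∑ x ∈ Sset m k, f x.1 = ∑ x ∈ paths m k, f x := by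
  have : Sset m k = (paths m k).subtype IsMotzkin2 := by
    ext x
    simp [Sset, paths, x.2]
  rw [this, sum_subtype_eq_sum_filter, filter_true_of_mem fun x hx => (mem_filter.1 hx).2.1]

def shape (x : Fin m → MSym) : Fin m → MSym := fun i => if x i = I then H else x i

theorem shape_apply_eq_iff {x : Fin m → MSym} {a : MSym} (ha : ¬isHI a) (i : Fin m) :
    shape x i = a ↔ x i = a := by
  unfold shape isHI at *
  cases a <;> cases x i <;> simp_all

theorem shape_apply_ne_I (x : Fin m → MSym) (i : Fin m) : shape x i ≠ I := by
  unfold shape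
  cases x i <;> simp

theorem isHI_shape_apply (x : Fin m → MSym) (i : Fin m) : isHI (shape x i) ↔ isHI (x i) := by
  unfold shape isHI
  cases x i <;> simp

theorem symCount_shape (x : Fin m → MSym) {a : MSym} (ha : ¬isHI a) :
    symCount (shape x) a = symCount x a := by
  simp only [symCount, shape_apply_eq_iff ha]

theorem isMotzkin2_shape_iff (x : Fin m → MSym) : IsMotzkin2 (shape x) ↔ IsMotzkin2 x := by
  have hU : ¬isHI U := by simp [isHI]
  have hD : ¬isHI D := by simp [isHI]
  simp only [IsMotzkin2, symCountPrefix, symCount, shape_apply_eq_iff hU, shape_apply_eq_iff hD]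

theorem shape_mem_paths_iff {x : Fin m → MSym} : shape x ∈ paths m k ↔ x ∈ paths m k := by
  simp [paths, isMotzkin2_shape_iff, symCount_shape x (a := U) (by simp [isHI])]

def hiSet (x : Fin m → MSym) : Finset (Fin m) := {i | isHI (x i)}

theorem mem_hiSet {x : Fin m → MSym} {i : Fin m} : i ∈ hiSet x ↔ isHI (x i) := by
  simp [hiSet]

theorem hiSet_shape (x : Fin m → MSym) : hiSet (shape x) = hiSet x := by
  simp only [hiSet, isHI_shape_apply]

theorem card_hiSet_of_mem_paths {x : Fin m → MSym} (hx : x ∈ paths m k) :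
    #(hiSet x) = m - 2 * k := by
  obtain ⟨⟨-, hUD⟩, hU⟩ := (mem_filter.1 hx).2
  have hUD' : univ.filter (fun i => ¬isHI (x i)) =
      univ.filter (fun i => x i = U) ∪ univ.filter (fun i => x i = D) := by
    ext i
    simp only [mem_filter, mem_union, mem_univ, true_and, isHI]
    cases h : x i <;> simp [h]
  have hdisj : Disjoint (univ.filter fun i => x i = U) (univ.filter fun i => x i = D) :=
    disjoint_filter.2 fun i _ h => by simp [h]
  have := card_filter_add_card_filter_not (s := univ) (fun i => isHI (x i))
  rw [hUD', card_union_of_disjoint hdisj, card_univ, Fintype.card_fin] at this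
  simp only [symCount] at hUD hU
  rw [hiSet]
  omega

def shapes (m k : ℕ) : Finset (Fin m → MSym) := {σ ∈ paths m k | ∀ i, σ i ≠ I}

theorem shape_mem_shapes {x : Fin m → MSym} (hx : x ∈ paths m k) : shape x ∈ shapes m k :=
  mem_filter.2 ⟨shape_mem_paths_iff.2 hx, shape_apply_ne_I x⟩

theorem symCount_I_of_mem_shapes {σ : Fin m → MSym} (hσ : σ ∈ shapes m k) :
    symCount σ I = 0 :=
  symCount_eq_zero_iff.2 (mem_filter.1 hσ).2

theorem symCount_H_of_mem_shapes {σ : Fin m → MSym} (hσ : σ ∈ shapes m k) :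
    symCount σ H = m - 2 * k := by
  rw [← card_hiSet_of_mem_paths (mem_filter.1 hσ).1, symCount, hiSet]
  congr 1
  exact filter_congr fun i _ => by simp [isHI, (mem_filter.1 hσ).2 i]

theorem eq_H_of_mem_hiSet {σ : Fin m → MSym} (hσ : ∀ i, σ i ≠ I) {i : Fin m}
    (hi : i ∈ hiSet σ) : σ i = H := by
  simpa [mem_hiSet, isHI, hσ i] using hi

def recolorings : MSym → Finset MSym
  | H => {H, I}
  | a => {a}

theorem mem_recolorings_iff {a b : MSym} (ha : a ≠ I) :
    b ∈ recolorings a ↔ (if b = I then H else b) = a := by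
  cases a <;> cases b <;> simp_all [recolorings]

theorem filter_paths_shape_eq {σ : Fin m → MSym} (hσ : σ ∈ shapes m k) :
    {x ∈ paths m k | shape x = σ} = Fintype.piFinset fun i => recolorings (σ i) := by
  obtain ⟨hσp, hσI⟩ := mem_filter.1 hσ
  ext x
  have hshape : x ∈ Fintype.piFinset (fun i => recolorings (σ i)) ↔ shape x = σ := by
    simp only [Fintype.mem_piFinset, mem_recolorings_iff (hσI _), funext_iff, shape]
  rw [mem_filter, hshape]
  constructor
  · exact And.right
  · rintro rfl
    exact ⟨shape_mem_paths_iff.1 hσp, rfl⟩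

theorem sum_prod_filter_shape_eq {R : Type*} [CommSemiring R] (f : MSym → R)
    {σ : Fin m → MSym} (hσ : σ ∈ shapes m k) :
    ∑ x ∈ paths m k with shape x = σ, ∏ i, f (x i) =
      ∏ i, ∑ c ∈ recolorings (σ i), f c := by
  rw [filter_paths_shape_eq hσ, prod_univ_sum]

theorem sum_weight_filter_shape_eq (α β : ℝ) {σ : Fin m → MSym} (hσ : σ ∈ shapes m k) :
    ∑ x ∈ paths m k with shape x = σ, ∏ i, symWeight α β (x i) =
      (Real.exp (-α) + Real.exp (-β)) ^ (m - 2 * k) * Real.exp (-α) ^ k := by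
  rw [sum_prod_filter_shape_eq _ hσ,
    prod_apply_eq_pow_symCount (fun c => ∑ d ∈ recolorings c, symWeight α β d) σ,
    symCount_I_of_mem_shapes hσ, symCount_H_of_mem_shapes hσ,
    (mem_filter.1 (mem_filter.1 hσ).1).2.2]
  simp [recolorings, symWeight, mul_comm]

theorem sum_weight_paths (α β : ℝ) :
    ∑ x ∈ paths m k, ∏ i, symWeight α β (x i) =
      #(shapes m k) * ((Real.exp (-α) + Real.exp (-β)) ^ (m - 2 * k) * Real.exp (-α) ^ k) := by
  rw [← sum_fiberwise_of_maps_to fun x hx => shape_mem_shapes hx,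
    sum_congr rfl fun σ hσ => sum_weight_filter_shape_eq α β hσ, sum_const, nsmul_eq_mul]

def IsLeadingPair (T : Finset (Fin m)) (p : Fin m × Fin m) : Prop :=
  (p.2 : ℕ) = p.1 + 1 ∧ p.1 ∈ T ∧ p.2 ∈ T ∧ ∀ i ∈ T, i = p.1 ∨ p.2 ≤ i

instance {T : Finset (Fin m)} : DecidablePred (IsLeadingPair T) := fun _ => by
  unfold IsLeadingPair
  infer_instance

section IsLeadingPair

variable {T : Finset (Fin m)} {p : Fin m × Fin m}

theorem IsLeadingPair.unique {q : Fin m × Fin m} (hp : IsLeadingPair T p)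
    (hq : IsLeadingPair T q) : p = q := by
  obtain ⟨hp2, hp1T, -, hpT⟩ := hp
  obtain ⟨hq2, hq1T, -, hqT⟩ := hq
  have h1 : p.1 = q.1 := by
    rcases hqT p.1 hp1T with h | h
    · exact h
    rcases hpT q.1 hq1T with h' | h'
    · exact h'.symm
    exact absurd (Fin.le_def.1 h) (by have := Fin.le_def.1 h'; omega)
  exact Prod.ext h1 (Fin.ext (by rw [hp2, hq2, h1]))

theorem IsLeadingPair.fst_ne_snd (hp : IsLeadingPair T p) : p.1 ≠ p.2 :=
  fun h => by have := hp.1; rw [h] at this; omega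

theorem IsLeadingPair.snd_le_of_mem_erase (hp : IsLeadingPair T p) {i : Fin m}
    (hi : i ∈ T.erase p.1) : p.2 ≤ i :=
  (hp.2.2.2 i (mem_of_mem_erase hi)).resolve_left (ne_of_mem_erase hi)

theorem IsLeadingPair.min'_erase (hp : IsLeadingPair T p) (hne : (T.erase p.1).Nonempty) :
    (T.erase p.1).min' hne = p.2 :=
  le_antisymm (min'_le _ _ (mem_erase.2 ⟨hp.fst_ne_snd.symm, hp.2.2.1⟩))
    (le_min' _ _ _ fun _ => hp.snd_le_of_mem_erase)

end IsLeadingPair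

theorem firstHIPairHH_iff {x : Fin m → MSym} :
    firstHIPairHH x ↔ ∃ p, IsLeadingPair (hiSet x) p ∧ x p.1 = H ∧ x p.2 = H := by
  simp only [firstHIPairHH, IsLeadingPair, mem_hiSet, isHI]
  constructor
  · rintro ⟨p, hp, h1, h2, hall⟩
    exact ⟨p, ⟨hp, Or.inl h1, Or.inl h2, hall⟩, h1, h2⟩
  · rintro ⟨p, ⟨hp, -, -, hall⟩, h1, h2⟩
    exact ⟨p, hp, h1, h2, hall⟩

theorem firstHIPairHH_iff_of_forall_ne_I {σ : Fin m → MSym} (hσ : ∀ i, σ i ≠ I) :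
    firstHIPairHH σ ↔ ∃ p, IsLeadingPair (hiSet σ) p := by
  rw [firstHIPairHH_iff]
  exact exists_congr fun p => ⟨And.left, fun hp =>
    ⟨hp, eq_H_of_mem_hiSet hσ hp.2.1, eq_H_of_mem_hiSet hσ hp.2.2.1⟩⟩

theorem filter_shape_firstHIPairHH_eq {σ : Fin m → MSym} (hσ : σ ∈ shapes m k)
    {p : Fin m × Fin m} (hp : IsLeadingPair (hiSet σ) p) :
    {x ∈ paths m k | firstHIPairHH x ∧ shape x = σ} =
      {x ∈ Fintype.piFinset (fun i => recolorings (σ i)) | x p.1 = H ∧ x p.2 = H} := by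
  rw [← filter_paths_shape_eq hσ, filter_filter]
  refine filter_congr fun x _ => and_comm.trans <| and_congr_right fun hx => ?_
  rw [firstHIPairHH_iff, ← hiSet_shape, hx]
  exact ⟨fun ⟨q, hq, hxq⟩ => hp.unique hq ▸ hxq, fun hxp => ⟨p, hp, hxp⟩⟩

theorem filter_shape_firstHIPairHH_eq_empty {σ : Fin m → MSym} (hσ : ¬firstHIPairHH σ)
    (hσI : ∀ i, σ i ≠ I) : {x ∈ paths m k | firstHIPairHH x ∧ shape x = σ} = ∅ := by
  refine filter_false_of_mem fun x _ ⟨hxB, hx⟩ => hσ ?_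
  obtain ⟨p, hp, -⟩ := firstHIPairHH_iff.1 hxB
  rw [← hiSet_shape, hx] at hp
  exact (firstHIPairHH_iff_of_forall_ne_I hσI).2 ⟨p, hp⟩

theorem sum_weight_filter_shape_firstHIPairHH (α β : ℝ) {σ : Fin m → MSym}
    (hσ : σ ∈ shapes m k) :
    (∑ x ∈ paths m k with firstHIPairHH x ∧ shape x = σ, ∏ i, symWeight α β (x i)) *
        (Real.exp (-α) + Real.exp (-β)) ^ 2 =
      if firstHIPairHH σ then
        Real.exp (-α) ^ 2 * ((Real.exp (-α) + Real.exp (-β)) ^ (m - 2 * k) * Real.exp (-α) ^ k)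
      else 0 := by
  have hσI := (mem_filter.1 hσ).2
  split_ifs with hB
  swap
  · rw [filter_shape_firstHIPairHH_eq_empty hB hσI, sum_empty, zero_mul]
  obtain ⟨p, hp⟩ := (firstHIPairHH_iff_of_forall_ne_I hσI).1 hB
  set t := fun i => recolorings (σ i)
  set t' := Function.update t p.1 {H}
  have hsum {i} (hi : i ∈ hiSet σ) :
      ∑ a ∈ t i, symWeight α β a = Real.exp (-α) + Real.exp (-β) := by
    simp [t, eq_H_of_mem_hiSet hσI hi, recolorings, symWeight]
  have hmem {i} (hi : i ∈ hiSet σ) : H ∈ t i := by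
    simp [t, eq_H_of_mem_hiSet hσI hi, recolorings]
  have ht' : {x ∈ Fintype.piFinset t | x p.1 = H ∧ x p.2 = H} =
      {x ∈ Fintype.piFinset t' | x p.2 = H} := by
    rw [Fintype.piFinset_update_singleton_eq_filter_piFinset_eq t _ (hmem hp.2.1), filter_filter]
  have ht'2 : t' p.2 = t p.2 := Function.update_of_ne hp.fst_ne_snd.symm _ _
  rw [filter_shape_firstHIPairHH_eq hσ hp, ← sum_weight_filter_shape_eq α β hσ,
    filter_paths_shape_eq hσ, ht']
  -- fixing the colour of one position of the fibre to `H` scales its weight by `a / (a + b)`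
  calc (∑ x ∈ Fintype.piFinset t' with x p.2 = H, ∏ i, symWeight α β (x i)) *
        (Real.exp (-α) + Real.exp (-β)) ^ 2
      = (∑ x ∈ Fintype.piFinset t' with x p.2 = H, ∏ i, symWeight α β (x i)) *
          (∑ c ∈ t' p.2, symWeight α β c) * ∑ c ∈ t p.1, symWeight α β c := by
        rw [ht'2, hsum hp.2.2.1, hsum hp.2.1]
        ring
    _ = Real.exp (-α) *
          ((∑ x ∈ Fintype.piFinset t with x p.1 = H, ∏ i, symWeight α β (x i)) *
            ∑ c ∈ t p.1, symWeight α β c) := by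
        rw [Fintype.sum_filter_piFinset_apply_eq_mul t' _ (ht'2 ▸ hmem hp.2.2.1),
          Fintype.piFinset_update_singleton_eq_filter_piFinset_eq t _ (hmem hp.2.1)]
        simp only [symWeight, mul_assoc]
    _ = Real.exp (-α) ^ 2 * ∑ x ∈ Fintype.piFinset t, ∏ i, symWeight α β (x i) := by
        rw [Fintype.sum_filter_piFinset_apply_eq_mul t _ (hmem hp.2.1)]
        simp only [symWeight]
        ring

theorem sum_weight_filter_firstHIPairHH (α β : ℝ) :
    (∑ x ∈ paths m k with firstHIPairHH x, ∏ i, symWeight α β (x i)) *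
        (Real.exp (-α) + Real.exp (-β)) ^ 2 =
      #{σ ∈ shapes m k | firstHIPairHH σ} * (Real.exp (-α) ^ 2 *
        ((Real.exp (-α) + Real.exp (-β)) ^ (m - 2 * k) * Real.exp (-α) ^ k)) := by
  rw [← sum_fiberwise_of_maps_to fun x hx => shape_mem_shapes (mem_filter.1 hx).1, sum_mul]
  simp only [filter_filter]
  rw [sum_congr rfl fun σ hσ => sum_weight_filter_shape_firstHIPairHH α β hσ, ← sum_filter,
    sum_const, nsmul_eq_mul]

section Restrict

variable {T : Finset (Fin m)} {n : ℕ} (hT : #Tᶜ = n)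

def restrictCompl (σ : Fin m → MSym) : Fin n → MSym := fun l => σ (Tᶜ.orderEmbOfFin hT l)

def extendH (w : Fin n → MSym) : Fin m → MSym := fun i =>
  if h : i ∈ Tᶜ then w ((Tᶜ.orderIsoOfFin hT).symm ⟨i, h⟩) else H

theorem restrictCompl_extendH (w : Fin n → MSym) : restrictCompl hT (extendH hT w) = w := by
  funext l
  simp only [restrictCompl, extendH, orderEmbOfFin_mem, dif_pos]
  exact congrArg w ((Tᶜ.orderIsoOfFin hT).symm_apply_apply l)

theorem extendH_apply_of_mem (w : Fin n → MSym) {i : Fin m} (hi : i ∈ T) :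
    extendH hT w i = H := by
  simp [extendH, hi]

variable {σ : Fin m → MSym}

theorem extendH_restrictCompl (hσ : ∀ i ∈ T, σ i = H) :
    extendH hT (restrictCompl hT σ) = σ := by
  funext i
  by_cases hi : i ∈ T
  · simp [extendH, hi, hσ i hi]
  · simp [extendH, restrictCompl, hi, orderEmbOfFin_orderIsoOfFin_symm]

theorem card_filter_restrictCompl (hσ : ∀ i ∈ T, σ i = H) {a : MSym} (ha : a ≠ H)
    (Q : Fin m → Prop) [DecidablePred Q] :
    #{l | Q (Tᶜ.orderEmbOfFin hT l) ∧ restrictCompl hT σ l = a} = #{i | Q i ∧ σ i = a} := by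
  refine (card_filter_orderEmbOfFin Tᶜ hT (fun i => Q i ∧ σ i = a)).trans (congrArg card ?_)
  ext i
  simp only [mem_filter, mem_univ, true_and, mem_compl]
  exact and_iff_right_of_imp fun ⟨_, hia⟩ hiT => ha (hia ▸ hσ i hiT)

theorem symCount_restrictCompl (hσ : ∀ i ∈ T, σ i = H) {a : MSym} (ha : a ≠ H) :
    symCount (restrictCompl hT σ) a = symCount σ a := by
  simpa [symCount] using card_filter_restrictCompl hT hσ ha (fun _ => True)

theorem isMotzkin2_restrictCompl_iff (hσ : ∀ i ∈ T, σ i = H) :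
    IsMotzkin2 (restrictCompl hT σ) ↔ IsMotzkin2 σ := by
  have hprefix {a : MSym} (ha : a ≠ H) (j : Fin m) : symCountPrefix σ a j =
      #{l | Tᶜ.orderEmbOfFin hT l ≤ j ∧ restrictCompl hT σ l = a} :=
    (card_filter_restrictCompl hT hσ ha (· ≤ j)).symm
  simp only [IsMotzkin2, symCount_restrictCompl hT hσ (a := U) (by simp),
    symCount_restrictCompl hT hσ (a := D) (by simp)]
  refine and_congr_left' ⟨fun hpre j => ?_, fun hpre t => ?_⟩
  · rw [hprefix (a := D) (by simp), hprefix (a := U) (by simp)]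
    -- the positions of `Tᶜ` up to `j` form an initial segment of `Fin n`
    rcases (Tᶜ.orderEmbOfFin hT).monotone.forall_not_le_or_exists_forall_le_iff j with
      hnone | ⟨t, ht⟩
    · simp [hnone]
    · simpa only [symCountPrefix, ht] using hpre t
  · have := hpre (Tᶜ.orderEmbOfFin hT t)
    rw [hprefix (a := D) (by simp), hprefix (a := U) (by simp)] at this
    simpa only [symCountPrefix, OrderEmbedding.le_iff_le] using this

theorem restrictCompl_mem_shapes_iff (hσ : ∀ i ∈ T, σ i = H) :
    restrictCompl hT σ ∈ shapes n k ↔ σ ∈ shapes m k := by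
  simp only [shapes, paths, mem_filter, mem_univ, true_and, isMotzkin2_restrictCompl_iff hT hσ,
    symCount_restrictCompl hT hσ (a := U) (by simp), ← symCount_eq_zero_iff,
    symCount_restrictCompl hT hσ (a := I) (by simp)]

theorem hiSet_restrictCompl_eq_empty_iff (hσ : ∀ i ∈ T, σ i = H) :
    hiSet (restrictCompl hT σ) = ∅ ↔ hiSet σ = T := by
  rw [eq_empty_iff_forall_notMem, Finset.ext_iff]
  simp only [mem_hiSet, restrictCompl]
  refine ⟨fun h i => ⟨fun hi => by_contra fun hiT => ?_, fun hiT => ?_⟩, fun h l hl => ?_⟩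
  · exact h ((Tᶜ.orderIsoOfFin hT).symm ⟨i, mem_compl.2 hiT⟩)
      (by rwa [orderEmbOfFin_orderIsoOfFin_symm])
  · simp [hσ i hiT, isHI]
  · exact mem_compl.1 (orderEmbOfFin_mem Tᶜ hT l) ((h _).1 hl)

end Restrict

theorem card_filter_hiSet_eq {T : Finset (Fin m)} {n : ℕ} (hT : #Tᶜ = n) :
    #{σ ∈ shapes m k | hiSet σ = T} = #{w ∈ shapes n k | hiSet w = ∅} := by
  have hH {σ : Fin m → MSym} (hσ : σ ∈ {σ ∈ shapes m k | hiSet σ = T}) :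
      ∀ i ∈ T, σ i = H := by
    intro i hi
    obtain ⟨hσs, rfl⟩ := mem_filter.1 hσ
    exact eq_H_of_mem_hiSet (mem_filter.1 hσs).2 hi
  have hext (w : Fin n → MSym) : ∀ i ∈ T, extendH hT w i = H :=
    fun i hi => extendH_apply_of_mem hT w hi
  refine card_nbij' (restrictCompl hT) (extendH hT) (fun σ hσ => ?_) (fun w hw => ?_)
    (fun σ hσ => extendH_restrictCompl hT (hH hσ)) (fun w _ => restrictCompl_extendH hT w)
  · obtain ⟨hσs, hσT⟩ := mem_filter.1 hσ
    exact mem_filter.2 ⟨(restrictCompl_mem_shapes_iff hT (hH hσ)).2 hσs,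
      (hiSet_restrictCompl_eq_empty_iff hT (hH hσ)).2 hσT⟩
  · rw [← restrictCompl_extendH hT w] at hw
    obtain ⟨hws, hwT⟩ := mem_filter.1 hw
    exact mem_filter.2 ⟨(restrictCompl_mem_shapes_iff hT (hext w)).1 hws,
      (hiSet_restrictCompl_eq_empty_iff hT (hext w)).1 hwT⟩

theorem val_min'_sub_one_add_one {n : ℕ} {S : Finset (Fin (n + 1))} (hS : S.Nonempty)
    (h0 : 0 ∉ S) : ((S.min' hS - 1 : Fin (n + 1)) : ℕ) + 1 = S.min' hS := by
  have hq0 : S.min' hS ≠ 0 := fun h => h0 (h ▸ min'_mem S hS)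
  rw [Fin.coe_sub_one, if_neg hq0]
  have := Fin.pos_iff_ne_zero.2 hq0
  omega

theorem min'_sub_one_notMem {n : ℕ} {S : Finset (Fin (n + 1))} (hS : S.Nonempty) (h0 : 0 ∉ S) :
    S.min' hS - 1 ∉ S := fun hmem => by
  have := Fin.le_iff_val_le_val.1 (min'_le S _ hmem)
  have := val_min'_sub_one_add_one hS h0
  omega

theorem isLeadingPair_insert_min'_sub_one {n : ℕ} {S : Finset (Fin (n + 1))} (hS : S.Nonempty)
    (h0 : 0 ∉ S) : IsLeadingPair (insert (S.min' hS - 1) S) (S.min' hS - 1, S.min' hS) := by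
  refine ⟨(val_min'_sub_one_add_one hS h0).symm, mem_insert_self _ _,
    mem_insert_of_mem (min'_mem S hS), fun i hi => ?_⟩
  rcases mem_insert.1 hi with h | h
  · exact Or.inl h
  · exact Or.inr (min'_le S i h)

theorem card_filter_exists_isLeadingPair (n h : ℕ) :
    #{T ∈ powersetCard (h + 2) (univ : Finset (Fin (n + 1))) | ∃ p, IsLeadingPair T p} =
      n.choose (h + 1) := by
  have hS {S : Finset (Fin (n + 1))} (hS : S ∈ powersetCard (h + 1) (univ.erase 0)) :
      S.Nonempty ∧ 0 ∉ S := by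
    obtain ⟨hsub, hcard⟩ := mem_powersetCard.1 hS
    exact ⟨card_pos.1 (by omega), fun h0 => (mem_erase.1 (hsub h0)).1 rfl⟩
  have hcard : #(powersetCard (h + 1) (univ.erase (0 : Fin (n + 1)))) = n.choose (h + 1) := by
    simp [card_powersetCard, card_erase_of_mem]
  rw [← hcard]
  symm
  refine card_bij (fun S hS' => insert ((S.min' (hS hS').1) - 1) S) (fun S hS' => ?_)
    (fun S₁ hS₁ S₂ hS₂ heq => ?_) (fun T hT => ?_)
  · obtain ⟨hne, h0⟩ := hS hS'
    refine mem_filter.2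
      ⟨mem_powersetCard_univ.2 ?_, _, isLeadingPair_insert_min'_sub_one hne h0⟩
    rw [card_insert_of_notMem (min'_sub_one_notMem hne h0), (mem_powersetCard.1 hS').2]
  · obtain ⟨hne₁, h0₁⟩ := hS hS₁
    obtain ⟨hne₂, h0₂⟩ := hS hS₂
    have hpair := (isLeadingPair_insert_min'_sub_one hne₁ h0₁).unique
      (heq ▸ isLeadingPair_insert_min'_sub_one hne₂ h0₂)
    rw [← erase_insert (min'_sub_one_notMem hne₁ h0₁),
      ← erase_insert (min'_sub_one_notMem hne₂ h0₂), heq, (Prod.mk.inj hpair).1]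
  · obtain ⟨hTcard, p, hp⟩ := mem_filter.1 hT
    have hSmem : T.erase p.1 ∈ powersetCard (h + 1) (univ.erase 0) := by
      refine mem_powersetCard.2 ⟨fun i hi => mem_erase.2 ⟨fun hi0 => ?_, mem_univ i⟩, ?_⟩
      · have := Fin.le_iff_val_le_val.1 (hp.snd_le_of_mem_erase hi)
        rw [hi0, hp.1] at this
        simp at this
      · rw [card_erase_of_mem hp.2.1, (mem_powersetCard_univ.1 hTcard)]
        rfl
    refine ⟨T.erase p.1, hSmem, ?_⟩
    have hfst : p.2 - 1 = p.1 := Fin.ext (by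
      rw [Fin.coe_sub_one, if_neg fun h0 => by simpa [h0] using hp.1, hp.1]
      rfl)
    simp only [hp.min'_erase, hfst, insert_erase hp.2.1]

theorem card_filter_shapes_firstHIPairHH (hm : 2 * k + 2 ≤ m) :
    m * #{σ ∈ shapes m k | firstHIPairHH σ} = (m - 2 * k) * #(shapes m k) := by
  obtain ⟨n, rfl⟩ : ∃ n, m = n + 1 := ⟨m - 1, by omega⟩
  obtain ⟨h, hh⟩ : ∃ h, n + 1 - 2 * k = h + 2 := ⟨n + 1 - 2 * k - 2, by omega⟩
  have hmaps : ∀ σ ∈ shapes (n + 1) k, hiSet σ ∈ powersetCard (h + 2) univ := fun σ hσ =>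
    mem_powersetCard_univ.2 (hh ▸ card_hiSet_of_mem_paths (mem_filter.1 hσ).1)
  have hfiber (T) (hT : T ∈ powersetCard (h + 2) univ) :
      #{σ ∈ shapes (n + 1) k | hiSet σ = T} = #{w ∈ shapes (2 * k) k | hiSet w = ∅} :=
    card_filter_hiSet_eq (by rw [card_compl, mem_powersetCard_univ.1 hT, Fintype.card_fin]; omega)
  have hall : #(shapes (n + 1) k) =
      (n + 1).choose (h + 2) * #{w ∈ shapes (2 * k) k | hiSet w = ∅} := by
    rw [card_eq_sum_card_fiberwise hmaps, sum_congr rfl hfiber, sum_const, card_powersetCard,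
      card_univ, Fintype.card_fin, smul_eq_mul]
  have hlead : #{σ ∈ shapes (n + 1) k | firstHIPairHH σ} =
      n.choose (h + 1) * #{w ∈ shapes (2 * k) k | hiSet w = ∅} := by
    have hset : {σ ∈ shapes (n + 1) k | firstHIPairHH σ} =
        {σ ∈ shapes (n + 1) k | ∃ p, IsLeadingPair (hiSet σ) p} :=
      filter_congr fun σ hσ => firstHIPairHH_iff_of_forall_ne_I (mem_filter.1 hσ).2
    have hmaps' : ∀ σ ∈ {σ ∈ shapes (n + 1) k | ∃ p, IsLeadingPair (hiSet σ) p},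
        hiSet σ ∈ {T ∈ powersetCard (h + 2) (univ : Finset (Fin (n + 1))) |
          ∃ p, IsLeadingPair T p} := fun σ hσ =>
      mem_filter.2 ⟨hmaps σ (mem_filter.1 hσ).1, (mem_filter.1 hσ).2⟩
    rw [hset, card_eq_sum_card_fiberwise hmaps', ← card_filter_exists_isLeadingPair,
      card_eq_sum_ones, sum_mul, one_mul]
    refine sum_congr rfl fun T hT => ?_
    obtain ⟨hTcard, hTlead⟩ := mem_filter.1 hT
    rw [filter_filter, ← hfiber T hTcard]
    exact congrArg card (filter_congr fun σ _ => and_iff_right_of_imp fun hσT => hσT ▸ hTlead)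
  rw [hh, hall, hlead, ← mul_assoc, ← mul_assoc, Nat.add_one_mul_choose_eq]
  ring

end Motzkin2Path

open Motzkin2Path

theorem motzkin_Bk_weight_general (α β : ℝ) (m k : ℕ) (hk : k + 1 ≤ m / 2) :
    ∑ x ∈ (Sset m k).filter (fun x => firstHIPairHH x.1),
        Real.exp (-(energy α β x.1)) =
      (((m : ℝ) - 2 * (k : ℝ)) / (m : ℝ)) *
        (Real.exp (-α) / (Real.exp (-α) + Real.exp (-β))) ^ 2 *
        ∑ x ∈ Sset m k, Real.exp (-(energy α β x.1)) := by
  have hkm : 2 * k + 2 ≤ m := by omega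
  have hcard : (m : ℝ) * #{σ ∈ shapes m k | firstHIPairHH σ} =
      ((m : ℝ) - 2 * k) * #(shapes m k) := by
    have := congrArg (Nat.cast (R := ℝ)) (card_filter_shapes_firstHIPairHH hkm)
    push_cast [Nat.cast_sub (by omega : 2 * k ≤ m)] at this
    exact this
  have hB := sum_weight_filter_firstHIPairHH (m := m) (k := k) α β
  rw [sum_filter,
    sum_Sset_eq_sum_paths fun x => if firstHIPairHH x then Real.exp (-energy α β x) else 0,
    ← sum_filter, sum_Sset_eq_sum_paths fun x => Real.exp (-energy α β x)]
  simp only [exp_neg_energy, ← mul_sum, sum_weight_paths]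
  have hab : 0 < Real.exp (-α) + Real.exp (-β) := by positivity
  have hm : (0 : ℝ) < m := Nat.cast_pos.2 (by omega)
  field_simp
  linear_combination (m : ℝ) * hB + Real.exp (-α) ^ 2 * Real.exp (-α) ^ k *
    (Real.exp (-α) + Real.exp (-β)) ^ (m - 2 * k) * hcard

/-- For all real `α, β`, all `m ≥ 2` and all
`0 ≤ k ≤ ⌊m/2⌋ - 1`, with `B_k ⊆ S_k` the set of paths in which a pair of
adjacent `H` symbols occurs before all other `H` or `I` symbols,
`Σ_{x ∈ B_k} e^{-E(x)} = ((m-2k)/m)·(e^{-α}/(e^{-α}+e^{-β}))²·Σ_{x ∈ S_k} e^{-E(x)}`. -/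
theorem motzkin_Bk_weight (α β : ℝ) (m k : ℕ) (hm : 2 ≤ m) (hk : k + 1 ≤ m / 2) :
    ∑ x ∈ (Sset m k).filter (fun x => firstHIPairHH x.1),
        Real.exp (-(energy α β x.1)) =
      (((m : ℝ) - 2 * (k : ℝ)) / (m : ℝ)) *
        (Real.exp (-α) / (Real.exp (-α) + Real.exp (-β))) ^ 2 *
        ∑ x ∈ Sset m k, Real.exp (-(energy α β x.1)) :=
  motzkin_Bk_weight_general α β m k hk
end

section
/- For all real α and β and every m ≥ 2, the sequence p(k) = binom(m, 2k)·C_k·e^{−αk}·(e^{−α} + e^{−β})^{m−2k}, defined for 0 ≤ k ≤ ⌊m/2⌋, is log-concave in k: p(k)² ≥ p(k−1)·p(k+1) for all 1 ≤ k ≤ ⌊m/2⌋ − 1. -/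
/-!
Write `p(k) = a(k)·g(k)` with `a(k) = binom(m, 2k)·C_k = m! / ((m-2k)!·k!·(k+1)!)` and
`g(k) = e^{-αk}·(e^{-α}+e^{-β})^{m-2k}`. The factor `g` is geometric in `k`, so `g(k)² = g(k-1)·g(k+1)`,
and `a(k+1)/a(k) = (m-2k)(m-2k-1) / ((k+1)(k+2))` is decreasing in `k`, which makes `a` log-concave.
-/

open Finset

/-- `p(k) = binom(m, 2k)·C_k·e^{-αk}·(e^{-α}+e^{-β})^{m-2k}`, where
`C_k = (1/(k+1))·binom(2k,k)` is the `k`-th Catalan number; up to a constant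
factor this is the stationary weight `π̄(k) = π(S_k)` of
`S_k = {x ∈ 𝔐²_m : |x|_U = k}` under the Gibbs distribution. -/
noncomputable def pSeq (α β : ℝ) (m k : ℕ) : ℝ :=
  (m.choose (2 * k) : ℝ) * (((2 * k).choose k / (k + 1) : ℕ) : ℝ) *
    Real.exp (-α * (k : ℝ)) * (Real.exp (-α) + Real.exp (-β)) ^ (m - 2 * k)

lemma catalan_succ_mul (n : ℕ) : catalan (n + 1) * (n + 2) = catalan n * (2 * (2 * n + 1)) := by
  apply Nat.eq_of_mul_eq_mul_left n.succ_pos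
  calc (n + 1) * (catalan (n + 1) * (n + 2))
      = (n + 1) * ((n + 1 + 1) * catalan (n + 1)) := by ring
    _ = 2 * (2 * n + 1) * ((n + 1) * catalan n) := by
      rw [succ_mul_catalan_eq_centralBinom, succ_mul_catalan_eq_centralBinom,
        Nat.succ_mul_centralBinom_succ]
    _ = (n + 1) * (catalan n * (2 * (2 * n + 1))) := by ring

lemma Nat.choose_add_two_mul (n k : ℕ) :
    n.choose (k + 2) * ((k + 1) * (k + 2)) = n.choose k * ((n - k) * (n - k - 1)) := by
  have h₁ := Nat.choose_succ_right_eq n k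
  have h₂ := Nat.choose_succ_right_eq n (k + 1)
  rw [Nat.sub_add_eq] at h₂
  calc n.choose (k + 2) * ((k + 1) * (k + 2))
      = n.choose (k + 1 + 1) * (k + 1 + 1) * (k + 1) := by ring
    _ = n.choose k * (n - k) * (n - k - 1) := by rw [h₂, mul_right_comm, h₁]
    _ = n.choose k * ((n - k) * (n - k - 1)) := by ring

/-- The number of Motzkin paths of length `m` with `k` up steps. -/
def motzkinCount (m k : ℕ) : ℕ := m.choose (2 * k) * catalan k

lemma motzkinCount_succ_mul (m k : ℕ) :
    motzkinCount m (k + 1) * ((k + 1) * (k + 2)) =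
      motzkinCount m k * ((m - 2 * k) * (m - 2 * k - 1)) := by
  have hchoose := Nat.choose_add_two_mul m (2 * k)
  have hcat := catalan_succ_mul k
  apply Nat.eq_of_mul_eq_mul_left (show 0 < 2 * (2 * k + 1) by omega)
  unfold motzkinCount
  rw [show 2 * (k + 1) = 2 * k + 2 by ring]
  calc 2 * (2 * k + 1) * (m.choose (2 * k + 2) * catalan (k + 1) * ((k + 1) * (k + 2)))
      = m.choose (2 * k + 2) * ((2 * k + 1) * (2 * k + 2)) * (catalan (k + 1) * (k + 2)) := by
        ring
    _ = 2 * (2 * k + 1) * (m.choose (2 * k) * catalan k * ((m - 2 * k) * (m - 2 * k - 1))) := by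
        rw [hchoose, hcat]; ring

/-- A nonnegative sequence whose successive ratios `a (k + 1) / a k = n k / d k` do not
increase is log-concave. -/
lemma mul_le_sq_of_succ_mul_eq {R : Type*} [CommSemiring R] [LinearOrder R] [IsStrictOrderedRing R]
    {a n d : ℕ → R} (k : ℕ) (ha : ∀ i, 0 ≤ a i) (hd : ∀ i, 0 < d i)
    (hratio : ∀ i, a (i + 1) * d i = a i * n i) (hmono : n (k + 1) * d k ≤ n k * d (k + 1)) :
    a k * a (k + 2) ≤ a (k + 1) ^ 2 := by
  have hpos : 0 < d k * d (k + 1) := mul_pos (hd k) (hd (k + 1))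
  refine le_of_mul_le_mul_right ?_ hpos
  calc a k * a (k + 2) * (d k * d (k + 1))
      = a k * d k * (a (k + 2) * d (k + 1)) := by ring
    _ = a k * a (k + 1) * (n (k + 1) * d k) := by rw [hratio (k + 1)]; ring
    _ ≤ a k * a (k + 1) * (n k * d (k + 1)) :=
        mul_le_mul_of_nonneg_left hmono (mul_nonneg (ha k) (ha (k + 1)))
    _ = a k * n k * (a (k + 1) * d (k + 1)) := by ring
    _ = a (k + 1) ^ 2 * (d k * d (k + 1)) := by rw [← hratio k]; ring

lemma motzkinCount_log_concave (m k : ℕ) :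
    motzkinCount m k * motzkinCount m (k + 2) ≤ motzkinCount m (k + 1) ^ 2 := by
  refine mul_le_sq_of_succ_mul_eq k (fun _ => Nat.zero_le _) (fun i => by positivity)
    (motzkinCount_succ_mul m) ?_
  gcongr <;> omega

lemma pSeq_eq_motzkinCount_mul (α β : ℝ) (m k : ℕ) :
    pSeq α β m k =
      motzkinCount m k * (Real.exp (-α * k) * (Real.exp (-α) + Real.exp (-β)) ^ (m - 2 * k)) := by
  rw [pSeq, motzkinCount, ← Nat.centralBinom_eq_two_mul_choose, ← catalan_eq_centralBinom_div]
  push_cast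
  ring

lemma exp_mul_pow_mul_eq_sq {α c : ℝ} {m k : ℕ} (hk : 2 * (k + 2) ≤ m) :
    (Real.exp (-α * k) * c ^ (m - 2 * k)) *
        (Real.exp (-α * (k + 2 : ℕ)) * c ^ (m - 2 * (k + 2))) =
      (Real.exp (-α * (k + 1 : ℕ)) * c ^ (m - 2 * (k + 1))) ^ 2 := by
  obtain ⟨t, rfl⟩ := Nat.exists_eq_add_of_le hk
  rw [show 2 * (k + 2) + t - 2 * k = t + 4 by omega, show 2 * (k + 2) + t - 2 * (k + 2) = t by omega,
    show 2 * (k + 2) + t - 2 * (k + 1) = t + 2 by omega, mul_pow, ← Real.exp_nat_mul]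
  rw [mul_mul_mul_comm, ← Real.exp_add]
  push_cast
  ring_nf

theorem pSeq_log_concave_general (α β : ℝ) (m : ℕ) :
    ∀ k : ℕ, 1 ≤ k → k + 1 ≤ m / 2 →
      pSeq α β m (k - 1) * pSeq α β m (k + 1) ≤ (pSeq α β m k) ^ 2 := by
  intro k hk hkm
  obtain ⟨j, rfl⟩ := Nat.exists_eq_add_of_le' hk
  have hgeom := exp_mul_pow_mul_eq_sq (α := α) (c := Real.exp (-α) + Real.exp (-β)) (k := j)
    (show 2 * (j + 2) ≤ m by omega)
  have hcount : (motzkinCount m j * motzkinCount m (j + 2) : ℝ) ≤ motzkinCount m (j + 1) ^ 2 := by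
    exact_mod_cast motzkinCount_log_concave m j
  simp only [Nat.add_sub_cancel, pSeq_eq_motzkinCount_mul]
  calc _ = (motzkinCount m j * motzkinCount m (j + 2) : ℝ) * _ := by rw [← hgeom]; ring
    _ ≤ _ := mul_le_mul_of_nonneg_right hcount (sq_nonneg _)
    _ = _ := by ring

/-- For all real `α, β` and every `m ≥ 2`, the sequence
`p(k)`, `0 ≤ k ≤ ⌊m/2⌋`, is log-concave: `p(k)² ≥ p(k-1)·p(k+1)` for all
`1 ≤ k ≤ ⌊m/2⌋ - 1`. -/
theorem pSeq_log_concave (α β : ℝ) (m : ℕ) (hm : 2 ≤ m) :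
    ∀ k : ℕ, 1 ≤ k → k + 1 ≤ m / 2 →
      pSeq α β m (k - 1) * pSeq α β m (k + 1) ≤ (pSeq α β m k) ^ 2 :=
  pSeq_log_concave_general α β m
end
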